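/- arXiv:1306.3668 — 10 statements merged into one kernel-verified Lean document; each statement's English description precedes it below -/
import Mathlib

section
/- Let p be a prime, N a positive integer with N ≤ p, and let s be a nonnegative integer with s ≤ p-1. Then the binomial coefficient C((N+1)(p-1)-s, p-1-s) is divisible by p if and only if s < p - N. -/
theorem stmt0 (p N s : ℕ) (hp : p.Prime) (hN : 1 ≤ N) (hNp : N ≤ p)
    (hs : s ≤ p - 1) :
    p ∣ Nat.choose ((N + 1) * (p - 1) - s) (p - 1 - s) ↔ s < p - N := by
  haveI : Fact p.Prime := ⟨hp⟩
  have hp2 := hp.two_le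
  obtain ⟨q, rfl⟩ : ∃ q, p = q + 1 := ⟨p - 1, by omega⟩
  simp only [Nat.add_sub_cancel] at *
  have key : Nat.choose ((N + 1) * q - s) (q - s) ≡
      Nat.choose (((N + 1) * q - s) % (q + 1)) ((q - s) % (q + 1)) *
        Nat.choose (((N + 1) * q - s) / (q + 1)) ((q - s) / (q + 1)) [MOD (q + 1)] :=
    Choose.choose_modEq_choose_mod_mul_choose_div_nat
  have hkmod : (q - s) % (q + 1) = q - s := Nat.mod_eq_of_lt (by omega)
  have hkdiv : (q - s) / (q + 1) = 0 := Nat.div_eq_of_lt (by omega)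
  by_cases hcase : s + N ≤ q
  · -- divisible case
    have hrhs : s < q + 1 - N := by omega
    have hn : (N + 1) * q - s = (q - s - N) + N * (q + 1) := by
      have h1 : (N + 1) * q + N = N * (q + 1) + q := by ring
      omega
    have hmod : ((N + 1) * q - s) % (q + 1) = q - s - N := by
      rw [hn, Nat.add_mul_mod_self_right, Nat.mod_eq_of_lt (by omega)]
    have hdiv : ((N + 1) * q - s) / (q + 1) = N := by
      rw [hn, Nat.add_mul_div_right _ _ (by omega : 0 < q + 1),
        Nat.div_eq_of_lt (by omega)]
      omega
    rw [hmod, hkmod] at key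
    rw [show Nat.choose (q - s - N) (q - s) = 0 from
      Nat.choose_eq_zero_of_lt (by omega), zero_mul] at key
    exact ⟨fun _ => hrhs, fun _ => (Nat.modEq_zero_iff_dvd).mp key⟩
  · -- non-divisible case
    have hrhs : ¬ s < q + 1 - N := by omega
    set r := q + q + 1 - N - s with hr
    have hn : (N + 1) * q - s = r + (N - 1) * (q + 1) := by
      have h1 : (N + 1) * q + (N - 1) + 1 = (N - 1) * (q + 1) + q + q + 1 := by
        have h2 : N - 1 + 1 = N := by omega
        nlinarith [h2]
      omega
    have hmod : ((N + 1) * q - s) % (q + 1) = r := by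
      rw [hn, Nat.add_mul_mod_self_right, Nat.mod_eq_of_lt (by omega)]
    have hdiv : ((N + 1) * q - s) / (q + 1) = N - 1 := by
      rw [hn, Nat.add_mul_div_right _ _ (by omega : 0 < q + 1),
        Nat.div_eq_of_lt (by omega)]
      omega
    rw [hmod, hkmod, hdiv, hkdiv, Nat.choose_zero_right, mul_one] at key
    have hnotdvd : ¬ (q + 1) ∣ Nat.choose r (q - s) := by
      intro hd
      have hle : q - s ≤ r := by omega
      have hfac := Nat.choose_mul_factorial_mul_factorial hle
      have hdvdfac : (q + 1) ∣ Nat.factorial r := by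
        rw [← hfac]
        exact Dvd.dvd.mul_right (Dvd.dvd.mul_right hd _) _
      have := (Nat.Prime.dvd_factorial hp).mp hdvdfac
      omega
    constructor
    · intro hd
      exact absurd
        (Nat.modEq_zero_iff_dvd.mp (key.symm.trans (Nat.modEq_zero_iff_dvd.mpr hd)))
        hnotdvd
    · intro h
      exact absurd h hrhs
end

section
/- Let K be a field of characteristic p > 0, let N ≤ p, let Q = ((x₀+1)⋯(x_N+1))^{p-1} in K[x₀,…,x_N], and let Q_{p-1} be the homogeneous component of Q of degree p-1. Then Q_{p-1} vanishes to order exactly p-N at the point (1,1,…,1); that is, after substituting xᵢ ↦ xᵢ+1 for i ≥ 1 and x₀ ↦ 1, the resulting polynomial has no nonzero monomials of total degree less than p-N, but has a nonzero monomial of total degree p-N. -/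
/-!
In characteristic `p` one has `(p - 1).choose j = (-1) ^ j` for `j < p`, so every coefficient of
`Q` in total degree `p - 1` is `(-1) ^ (p - 1) = 1`: `Q_{p-1}` is the complete homogeneous
symmetric polynomial `h_{p-1}`. Expanding `h_{p-1}(1, x₁ + 1, …, x_N + 1)` and summing the
products of binomial coefficients by the upper Chu–Vandermonde identity, the coefficient of `x^m`
is `(p - 1 + N).choose (|m| + N)` if `m₀ = 0` and `0` otherwise. For `|m| < p - N` this is
divisible by `p`, as `|m| + N < p ≤ p - 1 + N`; for `|m| = p - N` it is
`(p + N - 1).choose p ≡ 1` by Lucas' theorem.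
-/

open MvPolynomial Finset

theorem Nat.sum_antidiagonal_choose_mul_choose_add (d u a c : ℕ) :
    ∑ ij ∈ antidiagonal d, ij.1.choose a * (ij.2 + u).choose (c + u) =
      (d + u + 1).choose (a + c + u + 1) := by
  induction d generalizing a with
  | zero =>
    rcases a with _ | a <;> rcases c with _ | c
    all_goals simp [Nat.choose_eq_zero_of_lt]
  | succ d ih =>
    rw [Finset.Nat.sum_antidiagonal_succ]
    rcases a with _ | a
    · have h := ih 0
      simp only [Nat.choose_zero_right, one_mul, zero_add] at h ⊢
      rw [h, show d + 1 + u = d + u + 1 by omega, Nat.choose_succ_succ' (d + u + 1)]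
    · simp only [Nat.choose_zero_succ, zero_mul, zero_add, Nat.choose_succ_succ' _ a, add_mul,
        sum_add_distrib, ih]
      rw [show d + 1 + u + 1 = d + u + 1 + 1 by omega,
        show a + 1 + c + u + 1 = a + c + u + 1 + 1 by omega, Nat.choose_succ_succ' (d + u + 1)]

theorem Finset.Nat.sum_antidiagonalTuple_succ {M : Type*} [AddCommMonoid M] (k n : ℕ)
    (f : (Fin (k + 1) → ℕ) → M) :
    ∑ g ∈ Nat.antidiagonalTuple (k + 1) n, f g =
      ∑ ij ∈ antidiagonal n, ∑ g ∈ Nat.antidiagonalTuple k ij.2, f (Fin.cons ij.1 g) := by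
  simp only [Finset.sum, Nat.antidiagonalTuple, Multiset.Nat.antidiagonalTuple,
    List.Nat.antidiagonalTuple, Multiset.map_coe, Multiset.sum_coe, List.flatMap_def,
    List.map_flatten, List.sum_flatten, List.map_map]
  rw [show (antidiagonal n).val = (List.Nat.antidiagonal n : Multiset _) from rfl,
    Multiset.map_coe, Multiset.sum_coe]
  simp only [List.map_map, Function.comp_def]

theorem Finset.Nat.sum_antidiagonalTuple_prod_choose (k d : ℕ) (b : Fin (k + 1) → ℕ) :
    ∑ g ∈ Nat.antidiagonalTuple (k + 1) d, ∏ i, (g i).choose (b i) =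
      (d + k).choose (∑ i, b i + k) := by
  induction k generalizing d with
  | zero => simp [Nat.antidiagonalTuple_one]
  | succ k ih =>
    rw [Nat.sum_antidiagonalTuple_succ]
    simp only [Fin.prod_univ_succ (n := k + 1), Fin.cons_zero, Fin.cons_succ, ← mul_sum, ih]
    rw [Nat.sum_antidiagonal_choose_mul_choose_add, Fin.sum_univ_succ b]
    rfl

namespace CharP

variable (K : Type*) [Ring K] (p : ℕ) [Fact p.Prime] [CharP K p]

theorem cast_choose_sub_one {j : ℕ} (hj : j < p) : ((p - 1).choose j : K) = (-1) ^ j := by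
  obtain ⟨q, rfl⟩ := Nat.exists_eq_add_one_of_ne_zero (NeZero.ne p)
  rw [Nat.add_sub_cancel]
  induction j with
  | zero => simp
  | succ j ih =>
    have hpascal : ((q.choose j : ℕ) : K) + (q.choose (j + 1) : ℕ) = 0 := by
      rw [← Nat.cast_add, ← Nat.choose_succ_succ', CharP.cast_eq_zero_iff K (q + 1)]
      exact (Fact.out : (q + 1).Prime).dvd_choose_self j.succ_ne_zero hj
    rw [pow_succ, mul_neg_one, ← ih (by omega)]
    exact eq_neg_of_add_eq_zero_right hpascal

theorem neg_one_pow_sub_one : (-1 : K) ^ (p - 1) = 1 := by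
  have h := neg_one_pow_char K p
  rwa [← Nat.sub_one_add_one (NeZero.ne p), pow_succ, mul_neg_one, neg_inj] at h

theorem cast_add_choose_self {r : ℕ} (hr : r < p) : ((p + r).choose p : K) = 1 := by
  have h := Choose.choose_modEq_choose_mod_mul_choose_div_nat (p := p) (n := p + r) (k := p)
  rw [Nat.add_mod_left, Nat.mod_eq_of_lt hr, Nat.mod_self, Nat.add_div_left _ (NeZero.pos p),
    Nat.div_eq_of_lt hr, Nat.div_self (NeZero.pos p)] at h
  simpa using (CharP.natCast_eq_natCast K p).mpr h

end CharP

namespace MvPolynomial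

variable {σ R : Type*} [CommSemiring R] [Fintype σ] [DecidableEq σ]

theorem coeff_prod_X_pow_univ (m : σ →₀ ℕ) (g : σ → ℕ) :
    coeff m (∏ i, X i ^ g i : MvPolynomial σ R) = if ⇑m = g then 1 else 0 := by
  rw [coeff_prod_X_pow]
  refine if_congr ?_ rfl rfl
  simp only [Finsupp.ext_iff, Finsupp.indicator_of_mem (mem_univ _)]
  exact _root_.funext_iff.symm

theorem coeff_prod_X_add_one_pow (e : σ → ℕ) (m : σ →₀ ℕ) :
    coeff m (∏ i, (X i + 1 : MvPolynomial σ R) ^ e i) = ∏ i, ((e i).choose (m i) : R) := by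
  simp_rw [add_pow, one_pow, mul_one, prod_univ_sum, prod_mul_distrib, ← Nat.cast_prod,
    ← C_eq_coe_nat, coeff_sum, mul_comm _ (C _ : MvPolynomial σ R), coeff_C_mul,
    coeff_prod_X_pow_univ, mul_ite, mul_one, mul_zero, sum_ite_eq]
  rw [ite_eq_left_iff, Fintype.mem_piFinset, not_forall]
  rintro ⟨i, hi⟩
  rw [mem_range, not_lt] at hi
  rw [prod_eq_zero (mem_univ i) (Nat.choose_eq_zero_of_lt hi), Nat.cast_zero]

theorem hsymm_eq_sum_piAntidiag (n : ℕ) :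
    hsymm σ R n = ∑ g ∈ piAntidiag univ n, ∏ i, X i ^ g i := by
  rw [← map_sym_eq_piAntidiag, sum_map, hsymm, sym_univ]
  refine sum_congr rfl fun s _ => ?_
  rw [prod_multiset_map_count]
  exact prod_subset (subset_univ _) fun i _ hi => by
    rw [Multiset.mem_toFinset, ← Multiset.count_eq_zero] at hi
    rw [hi, pow_zero]

theorem coeff_hsymm (n : ℕ) (m : σ →₀ ℕ) :
    coeff m (hsymm σ R n) = if m.degree = n then 1 else 0 := by
  rw [hsymm_eq_sum_piAntidiag]
  simp_rw [coeff_sum, coeff_prod_X_pow_univ]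
  simp [mem_piAntidiag, Finsupp.degree_eq_sum]

theorem homogeneousComponent_prod_X_add_one_pow_sub_one (K : Type*) [CommRing K] (p : ℕ)
    [Fact p.Prime] [CharP K p] :
    homogeneousComponent (p - 1) ((∏ i, (X i + 1 : MvPolynomial σ K)) ^ (p - 1)) =
      hsymm σ K (p - 1) := by
  ext m
  rw [coeff_homogeneousComponent, coeff_hsymm, ← prod_pow, coeff_prod_X_add_one_pow]
  split_ifs with hm
  · have hlt : ∀ i, m i < p := fun i =>
      (m.le_degree i).trans_lt (hm ▸ Nat.sub_one_lt (NeZero.ne p))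
    rw [prod_congr rfl fun i _ => CharP.cast_choose_sub_one K p (hlt i), prod_pow_eq_pow_sum,
      ← Finsupp.degree_eq_sum, hm, CharP.neg_one_pow_sub_one]
  · rfl

theorem coeff_aeval_hsymm_fin_succ (k n : ℕ) (m : Fin (k + 1) →₀ ℕ) :
    coeff m (aeval (fun i : Fin (k + 1) => if i = 0 then 1 else X i + 1)
        (hsymm (Fin (k + 1)) R n)) =
      if m 0 = 0 then ((n + k).choose (m.degree + k) : R) else 0 := by
  have hterm : ∀ g : Fin (k + 1) → ℕ,
      ∏ i, (if i = 0 then 1 else X i + 1 : MvPolynomial (Fin (k + 1)) R) ^ g i =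
        ∏ i, (X i + 1) ^ (if i = 0 then 0 else g i) :=
    fun g => prod_congr rfl fun i _ => by split_ifs <;> simp
  rw [hsymm_eq_sum_piAntidiag, piAntidiag_univ_fin_eq_antidiagonalTuple, map_sum, coeff_sum]
  simp_rw [map_prod, map_pow, aeval_X, hterm, coeff_prod_X_add_one_pow]
  split_ifs with hm0
  · rw [Finsupp.degree_eq_sum, ← Finset.Nat.sum_antidiagonalTuple_prod_choose, Nat.cast_sum]
    refine sum_congr rfl fun g _ => ?_
    rw [Nat.cast_prod]
    refine prod_congr rfl fun i _ => ?_
    split_ifs with hi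
    · rw [hi, hm0, Nat.choose_zero_right, Nat.choose_zero_right]
    · rfl
  · refine sum_eq_zero fun g _ => prod_eq_zero (mem_univ 0) ?_
    rw [if_pos rfl, Nat.choose_eq_zero_of_lt (Nat.pos_of_ne_zero hm0), Nat.cast_zero]

end MvPolynomial

theorem stmt2 (p N : ℕ) (hp : p.Prime) (K : Type) [Field K] [CharP K p]
    (hN : 1 ≤ N) (hNp : N ≤ p) :
    let Q : MvPolynomial (Fin (N + 1)) K := (∏ i, (X i + 1)) ^ (p - 1)
    let Qc : MvPolynomial (Fin (N + 1)) K := homogeneousComponent (p - 1) Q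
    let R : MvPolynomial (Fin (N + 1)) K :=
      aeval (fun i : Fin (N + 1) => if i = 0 then 1 else X i + 1) Qc
    (∀ m : Fin (N + 1) →₀ ℕ, (m.sum fun _ e => e) < p - N → coeff m R = 0) ∧
    ∃ m : Fin (N + 1) →₀ ℕ, (m.sum fun _ e => e) = p - N ∧ coeff m R ≠ 0 := by
  intro Q Qc R
  have : Fact p.Prime := ⟨hp⟩
  have : NeZero N := ⟨by omega⟩
  have hR : ∀ m : Fin (N + 1) →₀ ℕ,
      coeff m R = if m 0 = 0 then ((p - 1 + N).choose (m.degree + N) : K) else 0 := fun m => by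
    simp only [R, Qc, Q, homogeneousComponent_prod_X_add_one_pow_sub_one,
      coeff_aeval_hsymm_fin_succ]
  have h10 : (1 : Fin (N + 1)) ≠ 0 := Fin.one_pos'.ne'
  refine ⟨fun m hm => ?_, Finsupp.single 1 (p - N), Finsupp.degree_single 1 (p - N), ?_⟩
  · change m.degree < p - N at hm
    rw [hR]
    split_ifs
    · exact (CharP.cast_eq_zero_iff K p _).mpr (hp.dvd_choose (by omega) (by omega) (by omega))
    · rfl
  · rw [hR, if_pos (Finsupp.single_eq_of_ne h10.symm), Finsupp.degree_single,
      show p - 1 + N = p + (N - 1) by omega, show p - N + N = p by omega,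
      CharP.cast_add_choose_self K p (by omega)]
    exact one_ne_zero
end

section
/- Let K be a field of characteristic p > 0, N ≤ p, and let Q_{p-1} be the degree-(p-1) homogeneous component of ((x₀+1)⋯(x_N+1))^{p-1}. Then Q_{p-1} lies in T^{p-N}, where T = (x₁-x₀, …, x_N-x₀) is the ideal of the point [1:⋯:1] in K[x₀,…,x_N]. -/
open MvPolynomial Finset

lemma lucas_div (p N s : ℕ) (hp : p.Prime) (hN : 1 ≤ N) (hs : s + N ≤ p - 1) :
    p ∣ Nat.choose ((N + 1) * (p - 1) - s) (p - 1 - s) := by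
  haveI : Fact p.Prime := ⟨hp⟩
  have hp1 : 1 ≤ p := hp.one_le
  have h1 : (N + 1) * (p - 1) + (N + 1) = (N + 1) * p := by
    rw [← Nat.mul_succ, Nat.succ_eq_add_one, Nat.sub_add_cancel hp1]
  have h2 : (N + 1) * p = N * p + p := by ring
  set a := (N + 1) * (p - 1) - s with ha
  set b := p - 1 - s with hb
  have har : a = (p - 1 - N - s) + N * p := by omega
  have hrp : p - 1 - N - s < p := by omega
  have hamod : a % p = p - 1 - N - s := by
    rw [har, Nat.add_mul_mod_self_right, Nat.mod_eq_of_lt hrp]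
  have hadiv : a / p = N := by
    rw [har, Nat.add_mul_div_right _ _ hp.pos, Nat.div_eq_of_lt hrp, Nat.zero_add]
  have hbmod : b % p = b := Nat.mod_eq_of_lt (by omega)
  have hbdiv : b / p = 0 := Nat.div_eq_of_lt (by omega)
  have key := Choose.choose_modEq_choose_mod_mul_choose_div (p := p) (n := a) (k := b)
  rw [hamod, hadiv, hbmod, hbdiv] at key
  rw [Nat.choose_eq_zero_of_lt (by omega : p - 1 - N - s < b)] at key
  rw [Nat.cast_zero, zero_mul] at key
  exact_mod_cast Int.modEq_zero_iff_dvd.mp key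

theorem stmt3 (p N : ℕ) (hp : p.Prime) (K : Type) [Field K] [CharP K p]
    (hN : 1 ≤ N) (hNp : N ≤ p) :
    homogeneousComponent (p - 1)
        ((∏ i, (X i + 1) : MvPolynomial (Fin (N + 1)) K) ^ (p - 1)) ∈
      (Ideal.span {f : MvPolynomial (Fin (N + 1)) K |
        ∃ i : Fin (N + 1), i ≠ 0 ∧ f = X i - X 0}) ^ (p - N) := by
  classical
  have hp1 : 1 ≤ p := hp.one_le
  set T : Ideal (MvPolynomial (Fin (N + 1)) K) :=
    Ideal.span {f : MvPolynomial (Fin (N + 1)) K |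
      ∃ i : Fin (N + 1), i ≠ 0 ∧ f = X i - X 0} with hT
  have hgen : ∀ i : Fin N, (X i.succ - X 0 : MvPolynomial (Fin (N + 1)) K) ∈ T :=
    fun i => Ideal.subset_span ⟨i.succ, Fin.succ_ne_zero i, rfl⟩
  -- Step 1: rewrite the big product
  have hP : ((∏ i, (X i + 1) : MvPolynomial (Fin (N + 1)) K)) ^ (p - 1)
      = ∑ g ∈ Fintype.piFinset (fun _ : Fin N => range p),
          ((∏ i, (p - 1).choose (g i) : ℕ) : MvPolynomial (Fin (N + 1)) K) *
            ((∏ i, (X i.succ - X 0) ^ (g i)) *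
              (X 0 + 1) ^ ((p - 1) + ∑ i, (p - 1 - g i))) := by
    calc ((∏ i, (X i + 1) : MvPolynomial (Fin (N + 1)) K)) ^ (p - 1)
        = ∏ i : Fin (N + 1), (X i + 1) ^ (p - 1) := (Finset.prod_pow _ _ _).symm
      _ = (X 0 + 1) ^ (p - 1) * ∏ i : Fin N, (X i.succ + 1) ^ (p - 1) :=
          Fin.prod_univ_succ _
      _ = (X 0 + 1) ^ (p - 1) * ∏ i : Fin N, ∑ j ∈ range p,
            (X i.succ - X 0) ^ j * (X 0 + 1) ^ (p - 1 - j) *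
              ((p - 1).choose j : MvPolynomial (Fin (N + 1)) K) := by
          congr 1
          apply Finset.prod_congr rfl
          intro i _
          have h1 : (X i.succ + 1 : MvPolynomial (Fin (N + 1)) K)
              = (X i.succ - X 0) + (X 0 + 1) := by ring
          rw [h1, add_pow, Nat.sub_add_cancel hp1]
      _ = (X 0 + 1) ^ (p - 1) * ∑ g ∈ Fintype.piFinset (fun _ : Fin N => range p),
            ∏ i : Fin N, ((X i.succ - X 0) ^ (g i) * (X 0 + 1) ^ (p - 1 - g i) *
              ((p - 1).choose (g i) : MvPolynomial (Fin (N + 1)) K)) := by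
          rw [Finset.prod_univ_sum]
      _ = _ := by
          rw [Finset.mul_sum]
          apply Finset.sum_congr rfl
          intro g _
          simp only [Finset.prod_mul_distrib, Finset.prod_pow_eq_pow_sum, pow_add,
            Nat.cast_prod]
          ring
  rw [hP, map_sum]
  apply Submodule.sum_mem
  intro g hg
  have hgi : ∀ i, g i ≤ p - 1 := by
    intro i
    have := Fintype.mem_piFinset.mp hg i
    rw [Finset.mem_range] at this
    omega
  set s := ∑ i, g i with hs
  set m := (p - 1) + ∑ i, (p - 1 - g i) with hm
  have hms : m + s = (N + 1) * (p - 1) := by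
    have : (∑ i, (p - 1 - g i)) + s = N * (p - 1) := by
      rw [hs, ← Finset.sum_add_distrib]
      rw [Finset.sum_congr rfl (fun i _ => by have := hgi i; omega : ∀ i ∈ univ, p - 1 - g i + g i = p - 1)]
      simp [Finset.sum_const, mul_comm]
    have h2 : (N + 1) * (p - 1) = N * (p - 1) + (p - 1) := by ring
    omega
  -- homogeneity of the Y-product
  have hYhom : ((∏ i, (X i.succ - X 0) ^ (g i)) : MvPolynomial (Fin (N + 1)) K).IsHomogeneous s := by
    rw [hs]
    apply IsHomogeneous.prod
    intro i _
    have : ((X i.succ - X 0) : MvPolynomial (Fin (N + 1)) K).IsHomogeneous 1 :=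
      (isHomogeneous_X _ _).sub (isHomogeneous_X _ _)
    simpa using this.pow (g i)
  have hYmem : ((∏ i, (X i.succ - X 0) ^ (g i)) : MvPolynomial (Fin (N + 1)) K) ∈ T ^ s := by
    rw [hs, ← Finset.prod_pow_eq_pow_sum]
    exact Ideal.prod_mem_prod (fun i _ => Ideal.pow_mem_pow (hgen i) _)
  -- expand (X 0 + 1) ^ m
  rw [add_pow]
  rw [Finset.mul_sum, Finset.mul_sum, map_sum]
  apply Submodule.sum_mem
  intro t ht
  -- rearrange the term
  have hrw : ((∏ i, (p - 1).choose (g i) : ℕ) : MvPolynomial (Fin (N + 1)) K) *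
        ((∏ i, (X i.succ - X 0) ^ (g i)) * ((X 0) ^ t * (1 : MvPolynomial (Fin (N + 1)) K) ^ (m - t) * (m.choose t : MvPolynomial (Fin (N + 1)) K)))
      = C ((((∏ i, (p - 1).choose (g i)) * m.choose t : ℕ)) : K) *
        ((∏ i, (X i.succ - X 0) ^ (g i)) * (X 0) ^ t) := by
    rw [map_natCast (C : K →+* MvPolynomial (Fin (N + 1)) K)]
    push_cast
    ring
  rw [hrw, homogeneousComponent_C_mul]
  have hhom : (((∏ i, (X i.succ - X 0) ^ (g i)) * (X 0) ^ t) : MvPolynomial (Fin (N + 1)) K).IsHomogeneous (s + t) := by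
    have hx : ((X 0 : MvPolynomial (Fin (N + 1)) K) ^ t).IsHomogeneous t := by
      simpa using (isHomogeneous_X _ _).pow t
    exact hYhom.mul hx
  rw [homogeneousComponent_of_mem ((mem_homogeneousSubmodule _ _).mpr hhom)]
  by_cases hst : p - 1 = s + t
  · rw [if_pos hst]
    by_cases hcase : p - N ≤ s
    · have h1 : ((∏ i, (X i.succ - X 0) ^ (g i)) : MvPolynomial (Fin (N + 1)) K) ∈ T ^ (p - N) :=
        Ideal.pow_le_pow_right hcase hYmem
      exact Ideal.mul_mem_left _ _ (Ideal.mul_mem_right _ _ h1)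
    · -- coefficient vanishes
      have hsN : s + N ≤ p - 1 := by omega
      have hteq : t = p - 1 - s := by omega
      have hmeq : m = (N + 1) * (p - 1) - s := by omega
      have hdvd : p ∣ m.choose t := by
        rw [hteq, hmeq]
        exact lucas_div p N s hp hN hsN
      have : (((∏ i, (p - 1).choose (g i)) * m.choose t : ℕ) : K) = 0 := by
        rw [Nat.cast_mul, (CharP.cast_eq_zero_iff K p _).mpr hdvd, mul_zero]
      rw [this, map_zero, zero_mul]
      exact Submodule.zero_mem _
  · rw [if_neg hst, mul_zero]
    exact Submodule.zero_mem _
end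

section
/- Let K be a field of characteristic not 2 containing j distinct j-th roots of unity, with j ≥ 3, and let f₁ = x₀(x₁ʲ - x₂ʲ), f₂ = x₁(x₀ʲ - x₂ʲ), f₃ = x₂(x₀ʲ - x₁ʲ) in K[x₀,x₁,x₂]. Then the form F = (x₁ʲ - x₂ʲ)(x₀ʲ - x₂ʲ)(x₀ʲ - x₁ʲ) does not lie in the square of the ideal I = (f₁, f₂, f₃); that is, there are no homogeneous polynomials Pᵢ, Q_{ij} of degree j-2 with F = Σᵢ Pᵢ fᵢ² + Σ_{i<j} Q_{ij} fᵢ fⱼ. -/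
open MvPolynomial

private lemma app3 (a b c : ℕ) (s : Fin 3) :
    (Finsupp.single 0 a + Finsupp.single 1 b + Finsupp.single 2 c : Fin 3 →₀ ℕ) s
      = if s = 0 then a else if s = 1 then b else c := by
  fin_cases s <;> simp [Finsupp.single_apply]

private lemma le3 {a b c d e f : ℕ} :
    (Finsupp.single 0 a + Finsupp.single 1 b + Finsupp.single 2 c : Fin 3 →₀ ℕ)
      ≤ Finsupp.single 0 d + Finsupp.single 1 e + Finsupp.single 2 f ↔ a ≤ d ∧ b ≤ e ∧ c ≤ f := by
  rw [Finsupp.le_def]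
  constructor
  · intro h
    exact ⟨by simpa [app3] using h 0, by simpa [app3] using h 1, by simpa [app3] using h 2⟩
  · rintro ⟨h1, h2, h3⟩ s
    fin_cases s <;> simp [app3] <;> assumption

private lemma sub3 {a b c d e f : ℕ} :
    (Finsupp.single 0 d + Finsupp.single 1 e + Finsupp.single 2 f : Fin 3 →₀ ℕ)
      - (Finsupp.single 0 a + Finsupp.single 1 b + Finsupp.single 2 c)
      = Finsupp.single 0 (d-a) + Finsupp.single 1 (e-b) + Finsupp.single 2 (f-c) := by
  ext s; fin_cases s <;> simp [app3, Finsupp.tsub_apply]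

private lemma eq3 {a b c d e f : ℕ} :
    (Finsupp.single 0 a + Finsupp.single 1 b + Finsupp.single 2 c : Fin 3 →₀ ℕ)
      = Finsupp.single 0 d + Finsupp.single 1 e + Finsupp.single 2 f ↔ a = d ∧ b = e ∧ c = f := by
  constructor
  · intro h
    refine ⟨?_, ?_, ?_⟩
    · simpa [app3] using congrFun (congrArg (↑·) h) 0
    · simpa [app3] using congrFun (congrArg (↑·) h) 1
    · simpa [app3] using congrFun (congrArg (↑·) h) 2
  · rintro ⟨rfl, rfl, rfl⟩; rfl

private lemma coeff_mul_pows {K : Type} [Field K] (g : MvPolynomial (Fin 3) K) (a b c d e f : ℕ) :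
    coeff (Finsupp.single 0 d + Finsupp.single 1 e + Finsupp.single 2 f)
      (g * (X 0 ^ a * X 1 ^ b * X 2 ^ c)) =
    if a ≤ d ∧ b ≤ e ∧ c ≤ f then
      coeff (Finsupp.single 0 (d-a) + Finsupp.single 1 (e-b) + Finsupp.single 2 (f-c)) g
    else 0 := by
  rw [X_pow_eq_monomial, X_pow_eq_monomial, X_pow_eq_monomial, monomial_mul, monomial_mul,
    coeff_mul_monomial', sub3]
  simp only [mul_one, one_mul, le3]

private lemma coeff_pows {K : Type} [Field K] (a b c d e f : ℕ) :
    coeff (Finsupp.single 0 d + Finsupp.single 1 e + Finsupp.single 2 f)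
      ((X 0 : MvPolynomial (Fin 3) K) ^ a * X 1 ^ b * X 2 ^ c) =
    if a = d ∧ b = e ∧ c = f then 1 else 0 := by
  rw [X_pow_eq_monomial, X_pow_eq_monomial, X_pow_eq_monomial, monomial_mul, monomial_mul,
    coeff_monomial]
  simp only [eq3, one_mul, mul_one]

private lemma key11 {K : Type} [Field K] {j : ℕ} (hj : 2 ≤ j) (g : MvPolynomial (Fin 3) K) :
    coeff (Finsupp.single 0 j + Finsupp.single 1 0 + Finsupp.single 2 (2*j))
      (g * ((X 0 * (X 1 ^ j - X 2 ^ j)) * (X 0 * (X 1 ^ j - X 2 ^ j)))) =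
    coeff (Finsupp.single 0 j + Finsupp.single 1 (2*j) + Finsupp.single 2 0)
      (g * ((X 0 * (X 1 ^ j - X 2 ^ j)) * (X 0 * (X 1 ^ j - X 2 ^ j)))) := by
  rw [show g * ((X 0 * (X 1 ^ j - X 2 ^ j)) * (X 0 * (X 1 ^ j - X 2 ^ j)))
      = g * (X 0 ^ (2) * X 1 ^ (2*j) * X 2 ^ (0))
        - (g * (X 0 ^ (2) * X 1 ^ (j) * X 2 ^ (j)) + g * (X 0 ^ (2) * X 1 ^ (j) * X 2 ^ (j)))
        + g * (X 0 ^ (2) * X 1 ^ (0) * X 2 ^ (2*j)) from by ring]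
  simp only [coeff_sub, coeff_add, coeff_mul_pows]
  rw [if_neg (show ¬(2 ≤ j ∧ 2*j ≤ 0 ∧ 0 ≤ 2*j) by omega),
    if_neg (show ¬(2 ≤ j ∧ j ≤ 0 ∧ j ≤ 2*j) by omega),
    if_pos (show (2 ≤ j ∧ 0 ≤ 0 ∧ 2*j ≤ 2*j) by omega),
    if_pos (show (2 ≤ j ∧ 2*j ≤ 2*j ∧ 0 ≤ 0) by omega),
    if_neg (show ¬(2 ≤ j ∧ j ≤ 2*j ∧ j ≤ 0) by omega),
    if_neg (show ¬(2 ≤ j ∧ 0 ≤ 2*j ∧ 2*j ≤ 0) by omega)]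
  try simp [Nat.sub_self]

private lemma key22 {K : Type} [Field K] {j : ℕ} (hj : 2 ≤ j) (g : MvPolynomial (Fin 3) K) :
    coeff (Finsupp.single 0 j + Finsupp.single 1 0 + Finsupp.single 2 (2*j))
      (g * ((X 1 * (X 0 ^ j - X 2 ^ j)) * (X 1 * (X 0 ^ j - X 2 ^ j)))) =
    coeff (Finsupp.single 0 j + Finsupp.single 1 (2*j) + Finsupp.single 2 0)
      (g * ((X 1 * (X 0 ^ j - X 2 ^ j)) * (X 1 * (X 0 ^ j - X 2 ^ j)))) := by
  rw [show g * ((X 1 * (X 0 ^ j - X 2 ^ j)) * (X 1 * (X 0 ^ j - X 2 ^ j)))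
      = g * (X 0 ^ (2*j) * X 1 ^ (2) * X 2 ^ (0))
        - (g * (X 0 ^ (j) * X 1 ^ (2) * X 2 ^ (j)) + g * (X 0 ^ (j) * X 1 ^ (2) * X 2 ^ (j)))
        + g * (X 0 ^ (0) * X 1 ^ (2) * X 2 ^ (2*j)) from by ring]
  simp only [coeff_sub, coeff_add, coeff_mul_pows]
  rw [if_neg (show ¬(2*j ≤ j ∧ 2 ≤ 0 ∧ 0 ≤ 2*j) by omega),
    if_neg (show ¬(j ≤ j ∧ 2 ≤ 0 ∧ j ≤ 2*j) by omega),
    if_neg (show ¬(0 ≤ j ∧ 2 ≤ 0 ∧ 2*j ≤ 2*j) by omega),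
    if_neg (show ¬(2*j ≤ j ∧ 2 ≤ 2*j ∧ 0 ≤ 0) by omega),
    if_neg (show ¬(j ≤ j ∧ 2 ≤ 2*j ∧ j ≤ 0) by omega),
    if_neg (show ¬(0 ≤ j ∧ 2 ≤ 2*j ∧ 2*j ≤ 0) by omega)]
  try simp [Nat.sub_self]

private lemma key33 {K : Type} [Field K] {j : ℕ} (hj : 2 ≤ j) (g : MvPolynomial (Fin 3) K) :
    coeff (Finsupp.single 0 j + Finsupp.single 1 0 + Finsupp.single 2 (2*j))
      (g * ((X 2 * (X 0 ^ j - X 1 ^ j)) * (X 2 * (X 0 ^ j - X 1 ^ j)))) =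
    coeff (Finsupp.single 0 j + Finsupp.single 1 (2*j) + Finsupp.single 2 0)
      (g * ((X 2 * (X 0 ^ j - X 1 ^ j)) * (X 2 * (X 0 ^ j - X 1 ^ j)))) := by
  rw [show g * ((X 2 * (X 0 ^ j - X 1 ^ j)) * (X 2 * (X 0 ^ j - X 1 ^ j)))
      = g * (X 0 ^ (2*j) * X 1 ^ (0) * X 2 ^ (2))
        - (g * (X 0 ^ (j) * X 1 ^ (j) * X 2 ^ (2)) + g * (X 0 ^ (j) * X 1 ^ (j) * X 2 ^ (2)))
        + g * (X 0 ^ (0) * X 1 ^ (2*j) * X 2 ^ (2)) from by ring]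
  simp only [coeff_sub, coeff_add, coeff_mul_pows]
  rw [if_neg (show ¬(2*j ≤ j ∧ 0 ≤ 0 ∧ 2 ≤ 2*j) by omega),
    if_neg (show ¬(j ≤ j ∧ j ≤ 0 ∧ 2 ≤ 2*j) by omega),
    if_neg (show ¬(0 ≤ j ∧ 2*j ≤ 0 ∧ 2 ≤ 2*j) by omega),
    if_neg (show ¬(2*j ≤ j ∧ 0 ≤ 2*j ∧ 2 ≤ 0) by omega),
    if_neg (show ¬(j ≤ j ∧ j ≤ 2*j ∧ 2 ≤ 0) by omega),
    if_neg (show ¬(0 ≤ j ∧ 2*j ≤ 2*j ∧ 2 ≤ 0) by omega)]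
  try simp [Nat.sub_self]

private lemma key12 {K : Type} [Field K] {j : ℕ} (hj : 2 ≤ j) (g : MvPolynomial (Fin 3) K) :
    coeff (Finsupp.single 0 j + Finsupp.single 1 0 + Finsupp.single 2 (2*j))
      (g * ((X 0 * (X 1 ^ j - X 2 ^ j)) * (X 1 * (X 0 ^ j - X 2 ^ j)))) =
    coeff (Finsupp.single 0 j + Finsupp.single 1 (2*j) + Finsupp.single 2 0)
      (g * ((X 0 * (X 1 ^ j - X 2 ^ j)) * (X 1 * (X 0 ^ j - X 2 ^ j)))) := by
  rw [show g * ((X 0 * (X 1 ^ j - X 2 ^ j)) * (X 1 * (X 0 ^ j - X 2 ^ j)))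
      = g * (X 0 ^ (j+1) * X 1 ^ (j+1) * X 2 ^ (0)) - g * (X 0 ^ (1) * X 1 ^ (j+1) * X 2 ^ (j))
        - g * (X 0 ^ (j+1) * X 1 ^ (1) * X 2 ^ (j)) + g * (X 0 ^ (1) * X 1 ^ (1) * X 2 ^ (2*j)) from by ring]
  simp only [coeff_sub, coeff_add, coeff_mul_pows]
  rw [if_neg (show ¬(j+1 ≤ j ∧ j+1 ≤ 0 ∧ 0 ≤ 2*j) by omega),
    if_neg (show ¬(1 ≤ j ∧ j+1 ≤ 0 ∧ j ≤ 2*j) by omega),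
    if_neg (show ¬(j+1 ≤ j ∧ 1 ≤ 0 ∧ j ≤ 2*j) by omega),
    if_neg (show ¬(1 ≤ j ∧ 1 ≤ 0 ∧ 2*j ≤ 2*j) by omega),
    if_neg (show ¬(j+1 ≤ j ∧ j+1 ≤ 2*j ∧ 0 ≤ 0) by omega),
    if_neg (show ¬(1 ≤ j ∧ j+1 ≤ 2*j ∧ j ≤ 0) by omega),
    if_neg (show ¬(j+1 ≤ j ∧ 1 ≤ 2*j ∧ j ≤ 0) by omega),
    if_neg (show ¬(1 ≤ j ∧ 1 ≤ 2*j ∧ 2*j ≤ 0) by omega)]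
  try simp [Nat.sub_self]

private lemma key13 {K : Type} [Field K] {j : ℕ} (hj : 2 ≤ j) (g : MvPolynomial (Fin 3) K) :
    coeff (Finsupp.single 0 j + Finsupp.single 1 0 + Finsupp.single 2 (2*j))
      (g * ((X 0 * (X 1 ^ j - X 2 ^ j)) * (X 2 * (X 0 ^ j - X 1 ^ j)))) =
    coeff (Finsupp.single 0 j + Finsupp.single 1 (2*j) + Finsupp.single 2 0)
      (g * ((X 0 * (X 1 ^ j - X 2 ^ j)) * (X 2 * (X 0 ^ j - X 1 ^ j)))) := by
  rw [show g * ((X 0 * (X 1 ^ j - X 2 ^ j)) * (X 2 * (X 0 ^ j - X 1 ^ j)))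
      = g * (X 0 ^ (j+1) * X 1 ^ (j) * X 2 ^ (1)) - g * (X 0 ^ (1) * X 1 ^ (2*j) * X 2 ^ (1))
        - g * (X 0 ^ (j+1) * X 1 ^ (0) * X 2 ^ (j+1)) + g * (X 0 ^ (1) * X 1 ^ (j) * X 2 ^ (j+1)) from by ring]
  simp only [coeff_sub, coeff_add, coeff_mul_pows]
  rw [if_neg (show ¬(j+1 ≤ j ∧ j ≤ 0 ∧ 1 ≤ 2*j) by omega),
    if_neg (show ¬(1 ≤ j ∧ 2*j ≤ 0 ∧ 1 ≤ 2*j) by omega),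
    if_neg (show ¬(j+1 ≤ j ∧ 0 ≤ 0 ∧ j+1 ≤ 2*j) by omega),
    if_neg (show ¬(1 ≤ j ∧ j ≤ 0 ∧ j+1 ≤ 2*j) by omega),
    if_neg (show ¬(j+1 ≤ j ∧ j ≤ 2*j ∧ 1 ≤ 0) by omega),
    if_neg (show ¬(1 ≤ j ∧ 2*j ≤ 2*j ∧ 1 ≤ 0) by omega),
    if_neg (show ¬(j+1 ≤ j ∧ 0 ≤ 2*j ∧ j+1 ≤ 0) by omega),
    if_neg (show ¬(1 ≤ j ∧ j ≤ 2*j ∧ j+1 ≤ 0) by omega)]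
  try simp [Nat.sub_self]

private lemma key23 {K : Type} [Field K] {j : ℕ} (hj : 2 ≤ j) (g : MvPolynomial (Fin 3) K) :
    coeff (Finsupp.single 0 j + Finsupp.single 1 0 + Finsupp.single 2 (2*j))
      (g * ((X 1 * (X 0 ^ j - X 2 ^ j)) * (X 2 * (X 0 ^ j - X 1 ^ j)))) =
    coeff (Finsupp.single 0 j + Finsupp.single 1 (2*j) + Finsupp.single 2 0)
      (g * ((X 1 * (X 0 ^ j - X 2 ^ j)) * (X 2 * (X 0 ^ j - X 1 ^ j)))) := by
  rw [show g * ((X 1 * (X 0 ^ j - X 2 ^ j)) * (X 2 * (X 0 ^ j - X 1 ^ j)))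
      = g * (X 0 ^ (2*j) * X 1 ^ (1) * X 2 ^ (1)) - g * (X 0 ^ (j) * X 1 ^ (j+1) * X 2 ^ (1))
        - g * (X 0 ^ (j) * X 1 ^ (1) * X 2 ^ (j+1)) + g * (X 0 ^ (0) * X 1 ^ (j+1) * X 2 ^ (j+1)) from by ring]
  simp only [coeff_sub, coeff_add, coeff_mul_pows]
  rw [if_neg (show ¬(2*j ≤ j ∧ 1 ≤ 0 ∧ 1 ≤ 2*j) by omega),
    if_neg (show ¬(j ≤ j ∧ j+1 ≤ 0 ∧ 1 ≤ 2*j) by omega),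
    if_neg (show ¬(j ≤ j ∧ 1 ≤ 0 ∧ j+1 ≤ 2*j) by omega),
    if_neg (show ¬(0 ≤ j ∧ j+1 ≤ 0 ∧ j+1 ≤ 2*j) by omega),
    if_neg (show ¬(2*j ≤ j ∧ 1 ≤ 2*j ∧ 1 ≤ 0) by omega),
    if_neg (show ¬(j ≤ j ∧ j+1 ≤ 2*j ∧ 1 ≤ 0) by omega),
    if_neg (show ¬(j ≤ j ∧ 1 ≤ 2*j ∧ j+1 ≤ 0) by omega),
    if_neg (show ¬(0 ≤ j ∧ j+1 ≤ 2*j ∧ j+1 ≤ 0) by omega)]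
  try simp [Nat.sub_self]


private lemma keyProd {K : Type} [Field K] {j : ℕ} (hj : 2 ≤ j) (g p q : MvPolynomial (Fin 3) K)
    (hp : p = X 0 * (X 1 ^ j - X 2 ^ j) ∨ p = X 1 * (X 0 ^ j - X 2 ^ j) ∨ p = X 2 * (X 0 ^ j - X 1 ^ j))
    (hq : q = X 0 * (X 1 ^ j - X 2 ^ j) ∨ q = X 1 * (X 0 ^ j - X 2 ^ j) ∨ q = X 2 * (X 0 ^ j - X 1 ^ j)) :
    coeff (Finsupp.single 0 j + Finsupp.single 1 0 + Finsupp.single 2 (2*j)) (g * (p * q)) =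
    coeff (Finsupp.single 0 j + Finsupp.single 1 (2*j) + Finsupp.single 2 0) (g * (p * q)) := by
  rcases hp with rfl | rfl | rfl <;> rcases hq with rfl | rfl | rfl
  · exact key11 hj g
  · exact key12 hj g
  · exact key13 hj g
  · rw [mul_comm (X 1 * (X 0 ^ j - X 2 ^ j))]; exact key12 hj g
  · exact key22 hj g
  · exact key23 hj g
  · rw [mul_comm (X 2 * (X 0 ^ j - X 1 ^ j))]; exact key13 hj g
  · rw [mul_comm (X 2 * (X 0 ^ j - X 1 ^ j))]; exact key23 hj g
  · exact key33 hj g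

private lemma coeffF4 {K : Type} [Field K] {j : ℕ} (hj : 2 ≤ j) :
    coeff (Finsupp.single 0 j + Finsupp.single 1 0 + Finsupp.single 2 (2*j))
      ((X 1 ^ j - X 2 ^ j) * (X 0 ^ j - X 2 ^ j) * ((X 0 : MvPolynomial (Fin 3) K) ^ j - X 1 ^ j)) = 1 := by
  rw [show (X 1 ^ j - X 2 ^ j) * (X 0 ^ j - X 2 ^ j) * ((X 0 : MvPolynomial (Fin 3) K) ^ j - X 1 ^ j)
      = X 0 ^ (2*j) * X 1 ^ (j) * X 2 ^ (0) - X 0 ^ (j) * X 1 ^ (2*j) * X 2 ^ (0)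
        - X 0 ^ (2*j) * X 1 ^ (0) * X 2 ^ (j) + X 0 ^ (j) * X 1 ^ (0) * X 2 ^ (2*j)
        + X 0 ^ (0) * X 1 ^ (2*j) * X 2 ^ (j) - X 0 ^ (0) * X 1 ^ (j) * X 2 ^ (2*j) from by ring]
  simp only [coeff_sub, coeff_add, coeff_pows]
  have e1 : 2*j ≠ j := by omega
  have e2 : j ≠ 0 := by omega
  have e3 : (0:ℕ) ≠ 2*j := by omega
  have e4 : 2*j ≠ 0 := by omega
  have e5 : j ≠ 2*j := by omega
  have e6 : (0:ℕ) ≠ j := by omega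
  simp [e1, e2, e3, e4, e5, e6]

private lemma coeffF2 {K : Type} [Field K] {j : ℕ} (hj : 2 ≤ j) :
    coeff (Finsupp.single 0 j + Finsupp.single 1 (2*j) + Finsupp.single 2 0)
      ((X 1 ^ j - X 2 ^ j) * (X 0 ^ j - X 2 ^ j) * ((X 0 : MvPolynomial (Fin 3) K) ^ j - X 1 ^ j)) = -1 := by
  rw [show (X 1 ^ j - X 2 ^ j) * (X 0 ^ j - X 2 ^ j) * ((X 0 : MvPolynomial (Fin 3) K) ^ j - X 1 ^ j)
      = X 0 ^ (2*j) * X 1 ^ (j) * X 2 ^ (0) - X 0 ^ (j) * X 1 ^ (2*j) * X 2 ^ (0)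
        - X 0 ^ (2*j) * X 1 ^ (0) * X 2 ^ (j) + X 0 ^ (j) * X 1 ^ (0) * X 2 ^ (2*j)
        + X 0 ^ (0) * X 1 ^ (2*j) * X 2 ^ (j) - X 0 ^ (0) * X 1 ^ (j) * X 2 ^ (2*j) from by ring]
  simp only [coeff_sub, coeff_add, coeff_pows]
  have e1 : 2*j ≠ j := by omega
  have e2 : j ≠ 0 := by omega
  have e3 : (0:ℕ) ≠ 2*j := by omega
  have e4 : 2*j ≠ 0 := by omega
  have e5 : j ≠ 2*j := by omega
  have e6 : (0:ℕ) ≠ j := by omega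
  simp [e1, e2, e3, e4, e5, e6]

private lemma main (K : Type) [Field K] (h2 : ringChar K ≠ 2) (j : ℕ) (hj : 2 ≤ j) :
    (X 1 ^ j - X 2 ^ j) * (X 0 ^ j - X 2 ^ j) * ((X 0 : MvPolynomial (Fin 3) K) ^ j - X 1 ^ j)
      ∉ (Ideal.span {X 0 * (X 1 ^ j - X 2 ^ j), X 1 * (X 0 ^ j - X 2 ^ j),
          X 2 * (X 0 ^ j - X 1 ^ j)} : Ideal (MvPolynomial (Fin 3) K)) ^ 2 := by
  intro hF
  rw [sq, Ideal.span_mul_span'] at hF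
  obtain ⟨c, hsupp, hsum⟩ := Submodule.mem_span_set.mp hF
  have key : ∀ m ∈ c.support,
      coeff (Finsupp.single 0 j + Finsupp.single 1 0 + Finsupp.single 2 (2*j)) (c m • m) =
      coeff (Finsupp.single 0 j + Finsupp.single 1 (2*j) + Finsupp.single 2 0) (c m • m) := by
    intro m hm
    have hmm := hsupp hm
    rw [Set.mem_mul] at hmm
    obtain ⟨p, hp, q, hq, rfl⟩ := hmm
    simp only [Set.mem_insert_iff, Set.mem_singleton_iff] at hp hq
    rw [smul_eq_mul]
    exact keyProd hj (c (p*q)) p q hp hq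
  have h4 : coeff (Finsupp.single 0 j + Finsupp.single 1 0 + Finsupp.single 2 (2*j))
        ((X 1 ^ j - X 2 ^ j) * (X 0 ^ j - X 2 ^ j) * ((X 0 : MvPolynomial (Fin 3) K) ^ j - X 1 ^ j))
      = coeff (Finsupp.single 0 j + Finsupp.single 1 (2*j) + Finsupp.single 2 0)
        ((X 1 ^ j - X 2 ^ j) * (X 0 ^ j - X 2 ^ j) * ((X 0 : MvPolynomial (Fin 3) K) ^ j - X 1 ^ j)) := by
    rw [← hsum, Finsupp.sum, coeff_sum, coeff_sum]
    exact Finset.sum_congr rfl key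
  rw [coeffF4 hj, coeffF2 hj] at h4
  have h5 : (2 : K) = 0 := by linear_combination h4
  exact Ring.two_ne_zero h2 h5

theorem stmt5 (K : Type) [Field K] (h2 : ringChar K ≠ 2) (j : ℕ) (hj : 3 ≤ j)
    (hroots : ∃ S : Finset K, S.card = j ∧ ∀ ζ ∈ S, ζ ^ j = 1) :
    let x0 : MvPolynomial (Fin 3) K := X 0
    let x1 : MvPolynomial (Fin 3) K := X 1
    let x2 : MvPolynomial (Fin 3) K := X 2
    let f1 := x0 * (x1 ^ j - x2 ^ j)
    let f2 := x1 * (x0 ^ j - x2 ^ j)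
    let f3 := x2 * (x0 ^ j - x1 ^ j)
    let F := (x1 ^ j - x2 ^ j) * (x0 ^ j - x2 ^ j) * (x0 ^ j - x1 ^ j)
    F ∉ (Ideal.span {f1, f2, f3}) ^ 2 := by
  intro x0 x1 x2 f1 f2 f3 F
  exact main K h2 j (by omega)
end

section
/- Let K be a field containing the finite field K' of order q = p^s with p an odd prime, and let I ⊆ K[x₀,x₁,x₂] be the radical ideal of all K'-rational points of the projective plane except q₀ = [0:1:0]. Then the least degree of a homogeneous element of I not vanishing at q₀ is exactly 2q - 1. -/
open MvPolynomial

/-- The homogeneous ideal of a point of projective space (given by a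
representative `π`): the ideal generated by the homogeneous polynomials
vanishing at `π`. -/
noncomputable def pointIdeal {K : Type} [Field K] {n : ℕ} (π : Fin n → K) :
    Ideal (MvPolynomial (Fin n) K) :=
  Ideal.span {f | (∃ d, f.IsHomogeneous d) ∧ eval π f = 0}

/-!
The form `x₁ (x₁^(q-1) - x₀^(q-1)) (x₁^(q-1) - x₂^(q-1))` has degree `2q - 1`, is `1` at `q₀` and
vanishes at every other `K'`-point, by Fermat's little theorem in `K'`.

Conversely, after moving `q₀` to `e₀`, let `f` be a form of degree `d ≤ 2q - 2` vanishing at the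
`K'`-points other than `q₀`, with `λ = f(e₀) ≠ 0`. For `x ∈ K'² \ 0` the restriction
`t ↦ f(t, x)` has degree `d` and leading coefficient `λ`, and vanishes on `K'`, so it is divisible
by `t^q - t`. Hence `d ≥ q`, and comparing coefficients its coefficient of `t^(d-q+1)` is `-λ`.
That coefficient is a binary form `g` of degree `q - 1` in `x`, equal to `-λ` on `K'² \ 0`. Then
`s ↦ g(s, 1)` has degree `< q` and is constant on `K'`, so its top coefficient `g(1, 0) = -λ`
vanishes, a contradiction.
-/

namespace Polynomial

theorem X_pow_card_sub_X_dvd_of_forall_eval_eq_zero {K : Type*} [Field K] (K' : Subfield K)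
    [Fintype K'] {P : K[X]} (h : ∀ a : K', P.eval (a : K) = 0) :
    X ^ Fintype.card K' - X ∣ P := by
  have hsplit : ∏ a : K', (X - C (a : K)) = X ^ Fintype.card K' - X := by
    have hK' : ((Finset.univ : Finset K').val.map fun a => X - C a).prod
        = (X ^ Fintype.card K' - X : K'[X]) := by
      rw [← FiniteField.roots_X_pow_card_sub_X]
      refine prod_multiset_X_sub_C_of_monic_of_roots_card_eq
        (monic_X_pow_sub (by rw [degree_X]; exact_mod_cast Fintype.one_lt_card)) ?_
      rw [FiniteField.roots_X_pow_card_sub_X, FiniteField.X_pow_card_sub_X_natDegree_eq K'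
        Fintype.one_lt_card]
      rfl
    have := congrArg (map (algebraMap K' K)) hK'
    simp only [Polynomial.map_multiset_prod, Multiset.map_map, Function.comp_def,
      Polynomial.map_sub, map_X, map_C, Polynomial.map_pow] at this
    exact this
  rw [← hsplit]
  exact Finset.prod_dvd_of_coprime
    ((pairwise_coprime_X_sub_C Subtype.val_injective).set_pairwise _)
    fun a _ => dvd_iff_isRoot.mpr (h a)

theorem coeff_natDegree_sub_add_one_of_X_pow_sub_X_dvd {R : Type*} [CommRing R] {q : ℕ}
    (hq : 2 ≤ q) {P : R[X]} (hdvd : X ^ q - X ∣ P) (hdeg : P.natDegree ≤ 2 * q - 2) :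
    P.coeff (P.natDegree - q + 1) = -P.leadingCoeff := by
  nontriviality R
  obtain ⟨H, rfl⟩ := hdvd
  rcases eq_or_ne H 0 with rfl | hH
  · simp
  have hmonic : (X ^ q - X : R[X]).Monic := monic_X_pow_sub (by rw [degree_X]; exact_mod_cast hq)
  have hnat : ((X ^ q - X) * H).natDegree = q + H.natDegree := by
    rw [hmonic.natDegree_mul' hH, natDegree_sub_eq_left_of_natDegree_lt] <;>
      simp only [natDegree_X_pow, natDegree_X]
    omega
  have hcoeff : ∀ n, ((X ^ q - X) * H).coeff n
      = (if q ≤ n then H.coeff (n - q) else 0) - (if 1 ≤ n then H.coeff (n - 1) else 0) := by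
    intro n
    rw [show (X ^ q - X) * H = H * X ^ q - H * X ^ 1 by ring, coeff_sub, coeff_mul_X_pow',
      coeff_mul_X_pow']
  rw [hnat] at hdeg
  rw [leadingCoeff, hnat, hcoeff, hcoeff, if_neg (by omega), if_pos (by omega), if_pos (by omega),
    if_pos (by omega), coeff_eq_zero_of_natDegree_lt (by omega : H.natDegree < q + H.natDegree - 1)]
  rw [zero_sub, sub_zero, Nat.add_sub_cancel_left, Nat.add_sub_cancel]

end Polynomial

namespace MvPolynomial.IsHomogeneous

section CommRing

variable {R : Type*} [CommRing R] {n d : ℕ} {f : MvPolynomial (Fin (n + 1)) R}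

theorem natDegree_finSuccEquiv_le (hf : f.IsHomogeneous d) :
    (finSuccEquiv R n f).natDegree ≤ d :=
  (natDegree_finSuccEquiv f).trans_le ((degreeOf_le_totalDegree f 0).trans hf.totalDegree_le)

theorem eval_coeff_finSuccEquiv_self (hf : f.IsHomogeneous d) (x : Fin n → R) :
    eval x ((finSuccEquiv R n f).coeff d) = eval (Fin.cons 1 0) f := by
  have hconst : ∀ y, eval y ((finSuccEquiv R n f).coeff d)
      = eval 0 ((finSuccEquiv R n f).coeff d) := by
    rw [← homogeneousComponent_eq_self (hf.finSuccEquiv_coeff_isHomogeneous d 0 (add_zero d)),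
      homogeneousComponent_zero]
    simp
  rw [hconst, eval_eq_eval_mv_eval',
    Polynomial.eval_eq_sum_range'
      (Nat.lt_succ_of_le (Polynomial.natDegree_map_le.trans hf.natDegree_finSuccEquiv_le)),
    Finset.sum_eq_single_of_mem d (Finset.self_mem_range_succ d)]
  · simp
  · intro i hi hid
    have hlt : i < d := by rw [Finset.mem_range] at hi; omega
    rw [Polynomial.coeff_map, eval_zero, constantCoeff_eq,
      (hf.finSuccEquiv_coeff_isHomogeneous i (d - i) (by omega)).coeff_eq_zero
        (by rw [map_zero]; omega), zero_mul]

end CommRing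

variable {K : Type*} [Field K] (K' : Subfield K) [Fintype K']

theorem eq_zero_of_forall_eval_eq {g : MvPolynomial (Fin 2) K} {e : ℕ} (hg : g.IsHomogeneous e)
    (he0 : e ≠ 0) (he : e < Fintype.card K') {v : K}
    (h : ∀ x : Fin 2 → K, (∀ i, x i ∈ K') → x ≠ 0 → eval x g = v) : v = 0 := by
  have hR : (finSuccEquiv K 1 g).map (eval ![1]) = Polynomial.C v := by
    refine Polynomial.eq_of_natDegree_lt_card_of_eval_eq _ _
      (Subtype.val_injective : Function.Injective ((↑) : K' → K)) (fun t => ?_) ?_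
    · rw [Polynomial.eval_C, ← eval_eq_eval_mv_eval']
      refine h _ (Fin.forall_fin_two.mpr ⟨t.2, ?_⟩) fun h0 => ?_
      · simp
      · simpa using congrFun h0 1
    · rw [Polynomial.natDegree_C, max_eq_left (Nat.zero_le _)]
      exact (Polynomial.natDegree_map_le.trans hg.natDegree_finSuccEquiv_le).trans_lt he
  have htop := congrArg (Polynomial.coeff · e) hR
  simp only [Polynomial.coeff_map, hg.eval_coeff_finSuccEquiv_self, Polynomial.coeff_C,
    if_neg he0] at htop
  rw [← htop, eq_comm]
  refine h _ (Fin.forall_fin_two.mpr ⟨?_, ?_⟩) fun h0 => ?_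
  · simp
  · simp
  · simpa using congrFun h0 0

theorem two_mul_card_sub_one_le {f : MvPolynomial (Fin 3) K} {d : ℕ}
    (hf : f.IsHomogeneous d) (hf0 : eval (Fin.cons 1 0) f ≠ 0)
    (hvan : ∀ t : K', ∀ x : Fin 2 → K, (∀ i, x i ∈ K') → x ≠ 0 →
      eval (Fin.cons (t : K) x) f = 0) :
    2 * Fintype.card K' - 1 ≤ d := by
  set q := Fintype.card K'
  have hq : 2 ≤ q := Fintype.one_lt_card
  set F := finSuccEquiv K 2 f
  have htop : ∀ x, (F.map (eval x)).coeff d = eval (Fin.cons 1 0) f := fun x => by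
    rw [Polynomial.coeff_map, hf.eval_coeff_finSuccEquiv_self]
  have hdeg : ∀ x, (F.map (eval x)).natDegree = d := fun x =>
    (Polynomial.natDegree_map_le.trans hf.natDegree_finSuccEquiv_le).antisymm
      (Polynomial.le_natDegree_of_ne_zero (by rw [htop]; exact hf0))
  have hdvd : ∀ x : Fin 2 → K, (∀ i, x i ∈ K') → x ≠ 0 →
      Polynomial.X ^ q - Polynomial.X ∣ F.map (eval x) :=
    fun x hx hx0 => Polynomial.X_pow_card_sub_X_dvd_of_forall_eval_eq_zero K' fun t => by
      rw [← eval_eq_eval_mv_eval']; exact hvan t x hx hx0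
  have he₀ : ∀ i, (Fin.cons 1 0 : Fin 2 → K) i ∈ K' := Fin.forall_fin_two.mpr ⟨by simp, by simp⟩
  have he₀0 : (Fin.cons 1 0 : Fin 2 → K) ≠ 0 := fun h => by simpa using congrFun h 0
  have hqd : q ≤ d := by
    have := Polynomial.natDegree_le_of_dvd (hdvd _ he₀ he₀0)
      fun h => hf0 (by rw [← htop, h, Polynomial.coeff_zero])
    rwa [FiniteField.X_pow_card_sub_X_natDegree_eq K hq, hdeg] at this
  by_contra! hlt
  refine hf0 (neg_eq_zero.mp ((hf.finSuccEquiv_coeff_isHomogeneous (d - q + 1) (q - 1)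
    (by omega)).eq_zero_of_forall_eval_eq K' (by omega) (by omega) fun x hx hx0 => ?_))
  have := Polynomial.coeff_natDegree_sub_add_one_of_X_pow_sub_X_dvd hq (hdvd x hx hx0)
    (by rw [hdeg]; omega)
  rwa [Polynomial.leadingCoeff, hdeg, htop, Polynomial.coeff_map] at this

end MvPolynomial.IsHomogeneous

theorem MvPolynomial.IsHomogeneous.mem_pointIdeal_iff {K : Type} [Field K] {n d : ℕ}
    {π : Fin n → K} {f : MvPolynomial (Fin n) K} (hf : f.IsHomogeneous d) :
    f ∈ pointIdeal π ↔ eval π f = 0 :=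
  ⟨fun h => RingHom.mem_ker.mp
    ((Ideal.span_le (I := RingHom.ker (eval π))).mpr (fun _ hg => hg.2) h),
    fun h => Ideal.subset_span ⟨⟨d, hf⟩, h⟩⟩

theorem Fin.cons_comp_swap_zero_one {α : Type*} (t : α) (x : Fin 2 → α) :
    (Fin.cons t x : Fin 3 → α) ∘ Equiv.swap 0 1 = ![x 0, t, x 1] := by
  funext i; fin_cases i <;> rfl

theorem ne_zero_and_not_exists_eq_smul_iff {K : Type*} [Field K] (π : Fin 3 → K) :
    (π ≠ 0 ∧ ¬∃ c : K, π = c • ![0, 1, 0]) ↔ (π 0 ≠ 0 ∨ π 2 ≠ 0) := by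
  constructor
  · rintro ⟨hπ0, hπ⟩
    by_contra! h
    refine hπ ⟨π 1, funext fun i => ?_⟩
    fin_cases i <;> simp [h]
  · intro h
    refine ⟨fun h0 => by simp [h0] at h, fun ⟨c, hc⟩ => ?_⟩
    simp [hc] at h

theorem Subfield.pow_card_sub_one_eq_one_of_mem {K : Type*} [Field K] {K' : Subfield K}
    [Fintype K'] {b : K} (hb : b ∈ K') (hb0 : b ≠ 0) : b ^ (Fintype.card K' - 1) = 1 := by
  simpa using congrArg Subtype.val
    (FiniteField.pow_card_sub_one_eq_one (⟨b, hb⟩ : K') fun h => hb0 (congrArg Subtype.val h))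

theorem exists_isHomogeneous_two_mul_card_sub_one {K : Type*} [Field K] (K' : Subfield K)
    [Fintype K'] : ∃ F : MvPolynomial (Fin 3) K, F.IsHomogeneous (2 * Fintype.card K' - 1) ∧
      eval ![0, 1, 0] F = 1 ∧
      ∀ π : Fin 3 → K, (∀ i, π i ∈ K') → (π 0 ≠ 0 ∨ π 2 ≠ 0) → eval π F = 0 := by
  set q := Fintype.card K'
  have hq : 2 ≤ q := Fintype.one_lt_card
  refine ⟨X 1 * (X 1 ^ (q - 1) - X 0 ^ (q - 1)) * (X 1 ^ (q - 1) - X 2 ^ (q - 1)), ?_, ?_, ?_⟩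
  · rw [show 2 * q - 1 = 1 + (q - 1) + (q - 1) by omega]
    exact ((isHomogeneous_X K 1).mul ((isHomogeneous_X_pow 1 (q - 1)).sub
      (isHomogeneous_X_pow 0 (q - 1)))).mul
      ((isHomogeneous_X_pow 1 (q - 1)).sub (isHomogeneous_X_pow 2 (q - 1)))
  · simp [zero_pow (show q - 1 ≠ 0 by omega)]
  · intro π hπ h02
    simp only [map_mul, map_sub, map_pow, eval_X]
    by_cases h1 : π 1 = 0
    · simp [h1]
    rw [Subfield.pow_card_sub_one_eq_one_of_mem (hπ 1) h1]
    rcases h02 with h | h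
    · rw [Subfield.pow_card_sub_one_eq_one_of_mem (hπ 0) h]; ring
    · rw [Subfield.pow_card_sub_one_eq_one_of_mem (hπ 2) h]; ring

theorem stmt7_general (p s : ℕ) (K : Type) [Field K] (K' : Subfield K) [Fintype K']
    (hcard : Fintype.card K' = p ^ s) :
    -- the excluded point q₀ = [0:1:0]
    let q0 : Fin 3 → K := fun i => if i = 1 then 1 else 0
    -- representatives of the K'-points of P² other than q₀
    let S : Set (Fin 3 → K) :=
      {π | π ≠ 0 ∧ (∀ i, π i ∈ K') ∧ ¬∃ c : K, π = c • q0}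
    let I : Ideal (MvPolynomial (Fin 3) K) := ⨅ π ∈ S, pointIdeal π
    IsLeast {d | ∃ f ∈ I, f.IsHomogeneous d ∧ eval q0 f ≠ 0}
      (2 * p ^ s - 1) := by
  intro q0 S I
  have hq0 : q0 = ![0, 1, 0] := by funext i; fin_cases i <;> rfl
  have hS : ∀ π, π ∈ S ↔ (∀ i, π i ∈ K') ∧ (π 0 ≠ 0 ∨ π 2 ≠ 0) := fun π => by
    rw [← ne_zero_and_not_exists_eq_smul_iff, ← hq0]
    exact and_left_comm
  have hI : ∀ {f d}, f.IsHomogeneous d → (f ∈ I ↔ ∀ π ∈ S, eval π f = 0) := fun hf => by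
    simp only [I, Ideal.mem_iInf, hf.mem_pointIdeal_iff]
  rw [← hcard, hq0]
  obtain ⟨F, hF, hFq0, hFS⟩ := exists_isHomogeneous_two_mul_card_sub_one K'
  refine ⟨⟨F, (hI hF).mpr fun π hπ => ((hS π).mp hπ).elim (hFS π), hF,
    by rw [hFq0]; exact one_ne_zero⟩, ?_⟩
  rintro d ⟨f, hfI, hf, hf0⟩
  refine (hf.rename_isHomogeneous (f := Equiv.swap 0 1)).two_mul_card_sub_one_le K' ?_
    fun t x hx hx0 => ?_
  · simpa [eval_rename, Fin.cons_comp_swap_zero_one] using hf0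
  · rw [eval_rename, Fin.cons_comp_swap_zero_one]
    refine (hI hf).mp hfI _ ((hS _).mpr ⟨?_, ?_⟩)
    · intro i; fin_cases i <;> simp [hx]
    · simpa [funext_iff, Fin.forall_fin_two, or_iff_not_and_not] using hx0

theorem stmt7 (p s : ℕ) (hp : p.Prime) (hp2 : 2 < p) (hs : 1 ≤ s)
    (K : Type) [Field K] [CharP K p] (K' : Subfield K) [Fintype K']
    (hcard : Fintype.card K' = p ^ s) :
    -- the excluded point q₀ = [0:1:0]
    let q0 : Fin 3 → K := fun i => if i = 1 then 1 else 0
    -- representatives of the K'-points of P² other than q₀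
    let S : Set (Fin 3 → K) :=
      {π | π ≠ 0 ∧ (∀ i, π i ∈ K') ∧ ¬∃ c : K, π = c • q0}
    let I : Ideal (MvPolynomial (Fin 3) K) := ⨅ π ∈ S, pointIdeal π
    IsLeast {d | ∃ f ∈ I, f.IsHomogeneous d ∧ eval q0 f ≠ 0}
      (2 * p ^ s - 1) :=
  stmt7_general p s K K' hcard
end

section
/- Let K be a field of characteristic p > 2 containing a finite field K' of order q = p^s, let I ⊆ K[x₀,x₁,x₂] be the radical ideal of all K'-points of P²(K') except q₀ = [0:1:0], and let r = (q+1)/2. Then I^{(2r-1)} = I^{(q)} is not contained in I^r, where I^{(m)} denotes the m-th symbolic power (the intersection over the points π ≠ q₀ of I_π^m). -/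
/-!
The witness is the product `G` of the `q²` lines of `P²(K')` that miss `q₀ = [0:1:0]`: through
each point of `S` pass `q` of them, so `G` lies in every `I_π ^ q`, while `G(q₀) = 1` and
`deg G = q²`.

On the other hand `I` is generated by forms vanishing on `S`, and by Chevalley–Warning such a
form of degree at most `2q - 2` also vanishes at `q₀`. Restricting to the line `x₀ = x₂ = 0`
therefore maps `I ^ r` into `(x₁ ^ (r (2q - 1)))`, whereas `G` restricts to `x₁ ^ (q²)`, and
`q² < r (2q - 1)` because `2r = q + 1`.
-/

open MvPolynomial

open Finset

theorem FiniteField.sum_pow_card_sub_one_mul (F : Type*) [Field F] [Fintype F] [DecidableEq F]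
    {k : ℕ} (hk : k ≠ 0) : ∑ x : F, x ^ ((Fintype.card F - 1) * k) = -1 := by
  have hD : (Fintype.card F - 1) * k ≠ 0 :=
    mul_ne_zero (Nat.sub_ne_zero_of_lt Fintype.one_lt_card) hk
  have hpow : ∀ x : F, x ^ ((Fintype.card F - 1) * k) = 1 - if x = 0 then 1 else 0 := by
    intro x
    split_ifs with hx
    · rw [hx, zero_pow hD, sub_self]
    · rw [pow_mul, FiniteField.pow_card_sub_one_eq_one x hx, one_pow, sub_zero]
  simp only [hpow, sum_sub_distrib, sum_const, card_univ, FiniteField.cast_card_eq_zero,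
    nsmul_eq_mul, mul_one, sum_ite_eq', mem_univ, if_true, zero_sub]

namespace Subfield

variable {K : Type*} [Field K] {K' : Subfield K} {σ : Type*} [DecidableEq σ]

theorem coe_comp_single (i : σ) (b : K') :
    (fun j ↦ ((Pi.single i b : σ → K') j : K)) = (b : K) • Pi.single i 1 := by
  ext j
  by_cases hj : j = i <;> simp [hj]

theorem exists_notMem_range_single_iff (i : σ) (π : σ → K) :
    (∃ v : σ → K', v ∉ Set.range (Pi.single i) ∧ (fun j ↦ (v j : K)) = π) ↔
      π ≠ 0 ∧ (∀ j, π j ∈ K') ∧ ¬∃ c : K, π = c • Pi.single i 1 := by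
  constructor
  · rintro ⟨v, hv, rfl⟩
    have hline : ¬∃ c : K, (fun j ↦ (v j : K)) = c • Pi.single i 1 := by
      rintro ⟨c, hc⟩
      refine hv ⟨v i, funext fun j ↦ ?_⟩
      by_cases hj : j = i
      · subst hj; simp
      · simpa [hj, eq_comm] using congrFun hc j
    exact ⟨fun h0 ↦ hline ⟨0, by rw [h0, zero_smul]⟩, fun j ↦ (v j).2, hline⟩
  · rintro ⟨-, hK, hline⟩
    refine ⟨fun j ↦ ⟨π j, hK j⟩, ?_, rfl⟩
    rintro ⟨b, hb⟩
    exact hline ⟨b, by rw [← coe_comp_single, hb]⟩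

variable (K') [Fintype K'] [Fintype σ]

theorem sum_coe_pow_card_sub_one_mul {k : ℕ} (hk : k ≠ 0) :
    ∑ x : K', (x : K) ^ ((Fintype.card K' - 1) * k) = -1 := by
  classical
  simpa using congrArg ((↑) : K' → K) (FiniteField.sum_pow_card_sub_one_mul K' hk)

theorem sum_prod_coe_pow_eq_zero (m : σ →₀ ℕ)
    (hm : (m.sum fun _ e ↦ e) < (Fintype.card K' - 1) * Fintype.card σ) :
    ∑ x : σ → K', ∏ i, (x i : K) ^ m i = 0 := by
  have := congrArg ((↑) : K' → K) <| MvPolynomial.sum_eval_eq_zero (monomial m (1 : K'))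
    (by rwa [totalDegree_monomial _ one_ne_zero])
  simpa [eval_monomial, Finsupp.prod_fintype] using this

theorem sum_eval_eq_zero (f : MvPolynomial σ K)
    (hf : f.totalDegree < (Fintype.card K' - 1) * Fintype.card σ) :
    ∑ x : σ → K', eval (fun i ↦ (x i : K)) f = 0 := by
  simp only [eval_eq']
  rw [sum_comm]
  refine sum_eq_zero fun m hm ↦ ?_
  rw [← mul_sum, sum_prod_coe_pow_eq_zero K' m ((le_totalDegree hm).trans_lt hf), mul_zero]

end Subfield

theorem MvPolynomial.IsHomogeneous.aeval_smul {R S σ : Type*} [CommSemiring R] [CommSemiring S]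
    [Algebra R S] {f : MvPolynomial σ R} {d : ℕ} (hf : f.IsHomogeneous d) (c : S) (x : σ → S) :
    MvPolynomial.aeval (c • x) f = c ^ d * MvPolynomial.aeval x f := by
  simp only [aeval_def, eval₂_eq, mul_sum]
  refine sum_congr rfl fun m hm ↦ ?_
  have hdeg : ∑ i ∈ m.support, m i = d := by
    simp [← hf (mem_support_iff.mp hm), Finsupp.weight_apply, Finsupp.sum]
  simp only [Pi.smul_apply, smul_eq_mul, mul_pow, prod_mul_distrib, prod_pow_eq_pow_sum, hdeg]
  ring

theorem MvPolynomial.IsHomogeneous.eval_smul {R σ : Type*} [CommSemiring R]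
    {f : MvPolynomial σ R} {d : ℕ} (hf : f.IsHomogeneous d) (c : R) (x : σ → R) :
    eval (c • x) f = c ^ d * eval x f :=
  hf.aeval_smul c x

/-- Summing `X i ^ e * f` over all `K'`-points, with `e` chosen so that the degree is
`(q - 1) (|σ| - 1)`, gives `0` by Chevalley–Warning, but only the points on the line through
`Pi.single i 1` contribute, and they add up to `-f (Pi.single i 1)`. -/
theorem MvPolynomial.IsHomogeneous.eval_single_eq_zero {K : Type*} [Field K] (K' : Subfield K)
    [Fintype K'] {σ : Type*} [Fintype σ] [DecidableEq σ] (hσ : 2 ≤ Fintype.card σ)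
    {f : MvPolynomial σ K} {d : ℕ} (hf : f.IsHomogeneous d)
    (hd : d ≤ (Fintype.card K' - 1) * (Fintype.card σ - 1)) (i : σ)
    (hvan : ∀ x : σ → K', x ∉ Set.range (Pi.single i) → eval (fun j ↦ (x j : K)) f = 0) :
    eval (Pi.single i 1) f = 0 := by
  set D := (Fintype.card K' - 1) * (Fintype.card σ - 1)
  set g := X i ^ (D - d) * f
  have hg : g.IsHomogeneous D := by
    simpa [Nat.sub_add_cancel hd] using (isHomogeneous_X_pow i (D - d)).mul hf
  have hq : 1 < Fintype.card K' := Fintype.one_lt_card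
  have hsum_zero : ∑ x : σ → K', eval (fun j ↦ (x j : K)) g = 0 :=
    Subfield.sum_eval_eq_zero K' g <| hg.totalDegree_le.trans_lt <|
      Nat.mul_lt_mul_of_pos_left (by omega) (by omega)
  have hsum_axis : ∑ x : σ → K', eval (fun j ↦ (x j : K)) g = -eval (Pi.single i 1) f := by
    rw [← Fintype.sum_of_injective (Pi.single i) (Pi.single_injective i)
      (fun b : K' ↦ (b : K) ^ D * eval (Pi.single i 1) f) _
      (fun x hx ↦ by simp only [g, map_mul, hvan x hx, mul_zero])]
    · rw [← sum_mul, Subfield.sum_coe_pow_card_sub_one_mul K' (by omega), neg_one_mul]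
    · intro b
      rw [Subfield.coe_comp_single, hg.eval_smul]
      simp [g]
  simpa using hsum_axis.symm.trans hsum_zero

section Restriction

variable {R σ : Type*} [CommRing R] [DecidableEq σ]

theorem MvPolynomial.IsHomogeneous.aeval_single_X {f : MvPolynomial σ R} {d : ℕ}
    (hf : f.IsHomogeneous d) (i : σ) :
    MvPolynomial.aeval (Pi.single i (Polynomial.X : Polynomial R)) f =
      Polynomial.C (eval (Pi.single i 1) f) * Polynomial.X ^ d := by
  have : (Pi.single i Polynomial.X : σ → Polynomial R) =
      (Polynomial.X : Polynomial R) • (algebraMap R (Polynomial R) ∘ Pi.single i 1) := by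
    ext j : 1
    by_cases hj : j = i <;> simp [hj]
  rw [this, hf.aeval_smul, aeval_algebraMap_apply, mul_comm]
  rfl

/-- Restricting to the line through `Pi.single i 1` sends `span H` into `(X ^ D)`, hence
`span H ^ r` into `(X ^ (r D))`, while `f` restricts to a nonzero multiple of `X ^ N`. -/
theorem MvPolynomial.IsHomogeneous.mul_le_of_mem_span_pow {H : Set (MvPolynomial σ R)} {D : ℕ}
    (i : σ) (hH : ∀ h ∈ H, ∃ d, h.IsHomogeneous d ∧ (D ≤ d ∨ eval (Pi.single i 1) h = 0))
    {f : MvPolynomial σ R} {r N : ℕ} (hfN : f.IsHomogeneous N) (hf : f ∈ Ideal.span H ^ r)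
    (hfi : eval (Pi.single i 1) f ≠ 0) : r * D ≤ N := by
  let φ := MvPolynomial.aeval (R := R) (Pi.single i (Polynomial.X : Polynomial R))
  have hspan : (Ideal.span H).map φ ≤ Ideal.span {Polynomial.X ^ D} := by
    rw [Ideal.map_span, Ideal.span_le]
    rintro _ ⟨h, hh, rfl⟩
    obtain ⟨d, hd, hDd | hzero⟩ := hH h hh
    · rw [SetLike.mem_coe, hd.aeval_single_X, Ideal.mem_span_singleton]
      exact dvd_mul_of_dvd_right (pow_dvd_pow Polynomial.X hDd) _
    · simp [φ, hd.aeval_single_X, hzero]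
  have hφf : φ f ∈ Ideal.span {Polynomial.X ^ (D * r)} := by
    rw [pow_mul, ← Ideal.span_singleton_pow]
    refine Ideal.pow_right_mono hspan r ?_
    rw [← Ideal.map_pow]
    exact Ideal.mem_map_of_mem φ hf
  rw [hfN.aeval_single_X, Ideal.mem_span_singleton, Polynomial.X_pow_dvd_iff] at hφf
  by_contra! hlt
  exact hfi (by simpa using hφf N (by rwa [mul_comm]))

end Restriction

theorem Ideal.prod_mem_pow_of_injective {R ι κ : Type*} [CommSemiring R] [Fintype ι]
    [Fintype κ] {J : Ideal R} (L : κ → R) (e : ι → κ) (he : Function.Injective e)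
    (hL : ∀ t, L (e t) ∈ J) : ∏ w, L w ∈ J ^ Fintype.card ι := by
  classical
  have hsub : ∏ t, L (e t) ∈ J ^ Fintype.card ι := by
    simpa using Ideal.prod_mem_prod (s := univ) (I := fun _ ↦ J) fun t _ ↦ hL t
  refine Ideal.mem_of_dvd _ ?_ hsub
  rw [← prod_image he.injOn]
  exact prod_dvd_prod_of_subset _ _ _ (subset_univ _)

section PointIdeal

variable {K : Type} [Field K] {n : ℕ}

theorem pointIdeal_le_ker_eval (π : Fin n → K) : pointIdeal π ≤ RingHom.ker (eval π) :=
  Ideal.span_le.mpr fun _ hf ↦ hf.2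

theorem mem_pointIdeal_of_isHomogeneous {π : Fin n → K} {f : MvPolynomial (Fin n) K} {d : ℕ}
    (hf : f.IsHomogeneous d) (hπ : eval π f = 0) : f ∈ pointIdeal π :=
  Ideal.subset_span ⟨⟨d, hf⟩, hπ⟩

attribute [local instance] MvPolynomial.gradedAlgebra in
theorem iInf_pointIdeal_le_span (S : Set (Fin n → K)) :
    ⨅ π ∈ S, pointIdeal π ≤
      Ideal.span {f | (∃ d, f.IsHomogeneous d) ∧ ∀ π ∈ S, eval π f = 0} := by
  have hhom : (⨅ π ∈ S, pointIdeal π).IsHomogeneous (homogeneousSubmodule (Fin n) K) :=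
    Ideal.IsHomogeneous.iInf₂ fun π _ ↦ Ideal.homogeneous_span _ _ fun _ ⟨⟨d, hd⟩, _⟩ ↦
      ⟨d, (mem_homogeneousSubmodule _ _).mpr hd⟩
  intro f hf
  rw [← sum_homogeneousComponent f]
  refine Ideal.sum_mem _ fun i _ ↦ Ideal.subset_span ⟨⟨i, homogeneousComponent_isHomogeneous i f⟩,
    fun π hπ ↦ pointIdeal_le_ker_eval π ?_⟩
  have hi : homogeneousComponent i f ∈ ⨅ π ∈ S, pointIdeal π :=
    decomposition.decompose'_apply f i ▸ hhom i hf
  exact Ideal.mem_iInf.mp (Ideal.mem_iInf.mp hi π) hπ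

end PointIdeal

section Lines

variable {K : Type} [Field K] (K' : Subfield K)

/-- The linear form `α x₀ + x₁ + γ x₂`; for `(α, γ) ∈ K'²` these cut out exactly the `q²` lines
of `P²(K')` that miss `[0:1:0]`. -/
noncomputable def lineForm (w : K' × K') : MvPolynomial (Fin 3) K :=
  C (w.1 : K) * X 0 + X 1 + C (w.2 : K) * X 2

theorem isHomogeneous_lineForm (w : K' × K') : (lineForm K' w).IsHomogeneous 1 :=
  ((isHomogeneous_C_mul_X _ 0).add (isHomogeneous_X _ 1)).add (isHomogeneous_C_mul_X _ 2)

theorem eval_lineForm (π : Fin 3 → K) (w : K' × K') :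
    eval π (lineForm K' w) = w.1 * π 0 + π 1 + w.2 * π 2 := by
  simp [lineForm]

variable [Fintype K']

noncomputable def linesProduct : MvPolynomial (Fin 3) K :=
  ∏ w, lineForm K' w

theorem isHomogeneous_linesProduct :
    (linesProduct K').IsHomogeneous (Fintype.card K' * Fintype.card K') := by
  simpa [linesProduct] using IsHomogeneous.prod univ (lineForm K') (fun _ ↦ 1)
    fun w _ ↦ isHomogeneous_lineForm K' w

theorem eval_single_linesProduct : eval (Pi.single 1 1) (linesProduct K') = 1 := by
  simp [linesProduct, eval_lineForm]

theorem linesProduct_mem_pointIdeal_pow (v : Fin 3 → K') (hv : v ∉ Set.range (Pi.single 1)) :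
    linesProduct K' ∈ pointIdeal (fun i ↦ (v i : K)) ^ Fintype.card K' := by
  have hoff : v 0 ≠ 0 ∨ v 2 ≠ 0 := by
    by_contra! h
    exact hv ⟨v 1, by ext j; fin_cases j <;> simp [h.1, h.2]⟩
  obtain ⟨e, he, hline⟩ : ∃ e : K' → K' × K', Function.Injective e ∧
      ∀ t, (e t).1 * v 0 + v 1 + (e t).2 * v 2 = 0 := by
    rcases hoff with h0 | h2
    · exact ⟨fun t ↦ (-(v 1 + t * v 2) / v 0, t), fun s t hst ↦ congrArg Prod.snd hst,
        fun t ↦ by field_simp; ring⟩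
    · exact ⟨fun t ↦ (t, -(t * v 0 + v 1) / v 2), fun s t hst ↦ congrArg Prod.fst hst,
        fun t ↦ by field_simp; ring⟩
  refine Ideal.prod_mem_pow_of_injective _ e he fun t ↦
    mem_pointIdeal_of_isHomogeneous (isHomogeneous_lineForm K' _) ?_
  rw [eval_lineForm]
  exact_mod_cast congrArg ((↑) : K' → K) (hline t)

end Lines

theorem stmt8_general (p s r : ℕ) (hr : 2 * r = p ^ s + 1)
    (K : Type) [Field K] (K' : Subfield K) [Fintype K']
    (hcard : Fintype.card K' = p ^ s) :
    let q0 : Fin 3 → K := fun i => if i = 1 then 1 else 0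
    let S : Set (Fin 3 → K) :=
      {π | π ≠ 0 ∧ (∀ i, π i ∈ K') ∧ ¬∃ c : K, π = c • q0}
    let I : Ideal (MvPolynomial (Fin 3) K) := ⨅ π ∈ S, pointIdeal π
    -- I^{(2r-1)} = I^{(q)} ⊄ I^r, where I^{(m)} = ⨅_π (pointIdeal π)^m
    ¬ (⨅ π ∈ S, (pointIdeal π) ^ (p ^ s)) ≤ I ^ r := by
  intro q0 S I hle
  have hq0 : q0 = Pi.single 1 1 := by
    ext j
    fin_cases j <;> rfl
  have hS : ∀ π, π ∈ S ↔ ∃ v : Fin 3 → K', v ∉ Set.range (Pi.single 1) ∧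
      (fun j ↦ (v j : K)) = π := fun π ↦ by
    rw [Subfield.exists_notMem_range_single_iff, ← hq0]
    rfl
  have hG : linesProduct K' ∈ I ^ r := hle <| by
    simp only [Ideal.mem_iInf]
    intro π hπ
    obtain ⟨v, hv, rfl⟩ := (hS π).1 hπ
    exact hcard ▸ linesProduct_mem_pointIdeal_pow K' v hv
  have hgen : ∀ h ∈ {f | (∃ d, f.IsHomogeneous d) ∧ ∀ π ∈ S, eval π f = 0}, ∃ d,
      h.IsHomogeneous d ∧ (2 * Fintype.card K' - 1 ≤ d ∨ eval (Pi.single 1 1) h = 0) := by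
    rintro h ⟨⟨d, hd⟩, hvan⟩
    refine ⟨d, hd, (le_or_gt _ d).imp_right fun hlt ↦
      hd.eval_single_eq_zero K' (by simp) ?_ 1 fun v hv ↦ hvan _ ((hS _).2 ⟨v, hv, rfl⟩)⟩
    simp only [Fintype.card_fin]
    omega
  have hdeg := (isHomogeneous_linesProduct K').mul_le_of_mem_span_pow 1 hgen
    (Ideal.pow_right_mono (iInf_pointIdeal_le_span S) r hG)
    (by rw [eval_single_linesProduct]; exact one_ne_zero)
  have hq : 2 ≤ Fintype.card K' := Fintype.one_lt_card
  obtain ⟨k, hk⟩ := Nat.exists_eq_add_of_le hq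
  rw [← hcard, hk] at hr
  rw [hk, show 2 * (2 + k) - 1 = 2 * k + 3 by omega] at hdeg
  nlinarith

theorem stmt8 (p s r : ℕ) (hp : p.Prime) (hp2 : 2 < p) (hs : 1 ≤ s)
    (hr : 2 * r = p ^ s + 1)
    (K : Type) [Field K] [CharP K p] (K' : Subfield K) [Fintype K']
    (hcard : Fintype.card K' = p ^ s) :
    let q0 : Fin 3 → K := fun i => if i = 1 then 1 else 0
    let S : Set (Fin 3 → K) :=
      {π | π ≠ 0 ∧ (∀ i, π i ∈ K') ∧ ¬∃ c : K, π = c • q0}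
    let I : Ideal (MvPolynomial (Fin 3) K) := ⨅ π ∈ S, pointIdeal π
    -- I^{(2r-1)} = I^{(q)} ⊄ I^r, where I^{(m)} = ⨅_π (pointIdeal π)^m
    ¬ (⨅ π ∈ S, (pointIdeal π) ^ (p ^ s)) ≤ I ^ r :=
  stmt8_general p s r hr K K' hcard
end

section
/- Let K' be the field of order q = p^s and let P be the product of the defining linear forms of all q² lines of P²(K') not passing through a fixed K'-point q₀. Then deg P = q², and through every K'-point other than q₀ there pass exactly q of these lines, so P lies in the q-th symbolic power I^{(q)} of the ideal I of all K'-points other than q₀. -/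
/-!
Every line of `P²(K')` avoiding `q₀ = [0:1:0]` has a unique equation `a·x₀ + x₁ + b·x₂`, so `P`
is a product of `q²` linear forms and has degree `q²`. For a `K'`-point `[u:v:w] ≠ q₀` we have
`(u, w) ≠ 0`, so the lines through it are the solutions `(a, b) ∈ K'²` of the nondegenerate linear
equation `u·a + w·b = -v`, of which there are exactly `q`. These `q` factors of `P` each lie in the
ideal of the point, hence `P` lies in its `q`-th power.
-/

open MvPolynomial

theorem Ideal.prod_mem_pow_card_filter {ι R : Type*} [CommSemiring R] (I : Ideal R)
    (T : Finset ι) (f : ι → R) (P : ι → Prop) [DecidablePred P]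
    (h : ∀ i ∈ T, P i → f i ∈ I) : ∏ i ∈ T, f i ∈ I ^ (T.filter P).card := by
  rw [← Finset.prod_filter_mul_prod_filter_not T P]
  refine Ideal.mul_mem_right _ _ ?_
  rw [← Finset.prod_const]
  exact Ideal.prod_mem_prod fun i hi => h i (Finset.mem_filter.1 hi).1 (Finset.mem_filter.1 hi).2

theorem card_linear_eq_of_left_ne_zero {F : Type*} [Field F] {c₁ : F} (c₂ d : F) (h : c₁ ≠ 0) :
    Nat.card {x : F × F // c₁ * x.1 + c₂ * x.2 = d} = Nat.card F := by
  refine Nat.card_congr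
    { toFun := fun x => x.1.2
      invFun := fun b => ⟨((d - c₂ * b) / c₁, b), by field_simp; ring⟩
      left_inv := ?_
      right_inv := fun _ => rfl }
  rintro ⟨⟨a, b⟩, hab⟩
  have ha : a = (d - c₂ * b) / c₁ := by rw [eq_div_iff h]; linear_combination hab
  simp [ha]

theorem card_linear_eq {F : Type*} [Field F] {c₁ c₂ : F} (d : F) (h : c₁ ≠ 0 ∨ c₂ ≠ 0) :
    Nat.card {x : F × F // c₁ * x.1 + c₂ * x.2 = d} = Nat.card F := by
  rcases h with h | h
  · exact card_linear_eq_of_left_ne_zero c₂ d h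
  · rw [← card_linear_eq_of_left_ne_zero c₁ d h]
    exact Nat.card_congr <| (Equiv.prodComm F F).subtypeEquiv fun x => by
      simp only [Equiv.prodComm_apply, Prod.fst_swap, Prod.snd_swap, add_comm]

theorem mem_pointIdeal_of_eval_eq_zero {K : Type} [Field K] {n d : ℕ} {π : Fin n → K}
    {f : MvPolynomial (Fin n) K} (hf : f.IsHomogeneous d) (h : eval π f = 0) :
    f ∈ pointIdeal π :=
  Ideal.subset_span ⟨⟨d, hf⟩, h⟩

section PlaneLine

variable {K : Type} [Field K]

noncomputable def planeLine (a b : K) : MvPolynomial (Fin 3) K :=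
  C a * X 0 + X 1 + C b * X 2

theorem isHomogeneous_planeLine (a b : K) : (planeLine a b).IsHomogeneous 1 :=
  ((isHomogeneous_C_mul_X a 0).add (isHomogeneous_X K 1)).add (isHomogeneous_C_mul_X b 2)

theorem eval_planeLine (π : Fin 3 → K) (a b : K) :
    eval π (planeLine a b) = π 0 * a + π 1 + π 2 * b := by
  simp only [planeLine, map_add, map_mul, eval_C, eval_X]
  ring

theorem totalDegree_prod_planeLine {ι : Type*} (T : Finset ι) (a b : ι → K) :
    (∏ i ∈ T, planeLine (a i) (b i)).totalDegree = T.card := by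
  have hom : (∏ i ∈ T, planeLine (a i) (b i)).IsHomogeneous T.card := by
    simpa using IsHomogeneous.prod T _ (fun _ => 1) fun i _ => isHomogeneous_planeLine (a i) (b i)
  refine hom.totalDegree fun h0 => ?_
  have : eval (Pi.single 1 1) (∏ i ∈ T, planeLine (a i) (b i)) = 1 := by
    simp [eval_planeLine]
  simp [h0] at this

theorem card_planeLine_eval_eq_zero (K' : Subfield K) {π : Fin 3 → K} (hπ : ∀ i, π i ∈ K')
    (h : π 0 ≠ 0 ∨ π 2 ≠ 0) :
    Nat.card {ab : K' × K' // eval π (planeLine (ab.1 : K) ab.2) = 0} = Nat.card K' := by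
  let u : K' := ⟨π 0, hπ 0⟩
  let v : K' := ⟨π 1, hπ 1⟩
  let w : K' := ⟨π 2, hπ 2⟩
  have hline : ∀ ab : K' × K', eval π (planeLine (ab.1 : K) ab.2) = 0 ↔ u * ab.1 + w * ab.2 = -v :=
    fun ab => by
      rw [eval_planeLine, ← Subtype.coe_inj]
      simp only [Subfield.coe_add, Subfield.coe_mul, Subfield.coe_neg, u, v, w]
      constructor <;> intro h <;> linear_combination h
  rw [Nat.card_congr (Equiv.subtypeEquivRight hline)]
  exact card_linear_eq (-v) <|
    h.imp (fun h0 hu => h0 (congrArg Subtype.val hu)) fun h2 hw => h2 (congrArg Subtype.val hw)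

end PlaneLine

theorem stmt9_general (p s : ℕ)
    (K : Type) [Field K] (K' : Subfield K) [Fintype K']
    (hcard : Fintype.card K' = p ^ s) :
    -- the excluded point q₀ = [0:1:0]
    let q0 : Fin 3 → K := fun i => if i = 1 then 1 else 0
    let S : Set (Fin 3 → K) :=
      {π | π ≠ 0 ∧ (∀ i, π i ∈ K') ∧ ¬∃ c : K, π = c • q0}
    -- the lines of P²(K') not through q₀ are a·x₀ + x₁ + b·x₂, (a,b) ∈ K'²
    let line : K' × K' → MvPolynomial (Fin 3) K :=
      fun ab => C (ab.1 : K) * X 0 + X 1 + C (ab.2 : K) * X 2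
    let P : MvPolynomial (Fin 3) K := ∏ ab : K' × K', line ab
    P.totalDegree = (p ^ s) ^ 2 ∧
    (∀ π ∈ S, Nat.card {ab : K' × K' // eval π (line ab) = 0} = p ^ s) ∧
    P ∈ ⨅ π ∈ S, (pointIdeal π) ^ (p ^ s) := by
  classical
  intro q0 S line P
  have hcount : ∀ π ∈ S, Nat.card {ab : K' × K' // eval π (line ab) = 0} = p ^ s := by
    rintro π ⟨-, hπK', hπq0⟩
    refine (card_planeLine_eval_eq_zero K' hπK' ?_).trans (by rw [Nat.card_eq_fintype_card, hcard])
    by_contra! h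
    exact hπq0 ⟨π 1, funext fun i => by fin_cases i <;> simp [q0, h.1, h.2]⟩
  refine ⟨?_, hcount, ?_⟩
  · have hP : P = ∏ ab : K' × K', planeLine (ab.1 : K) ab.2 := rfl
    rw [hP, totalDegree_prod_planeLine, Finset.card_univ, Fintype.card_prod, hcard, sq]
  · simp only [Submodule.mem_iInf]
    intro π hπ
    have hmem := Ideal.prod_mem_pow_card_filter (pointIdeal π) Finset.univ line
      (fun ab => eval π (line ab) = 0)
      fun ab _ h => mem_pointIdeal_of_eval_eq_zero (isHomogeneous_planeLine _ _) h
    rwa [← Fintype.card_subtype, ← Nat.card_eq_fintype_card, hcount π hπ] at hmem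

theorem stmt9 (p s : ℕ) (hp : p.Prime) (hs : 1 ≤ s)
    (K : Type) [Field K] [CharP K p] (K' : Subfield K) [Fintype K']
    (hcard : Fintype.card K' = p ^ s) :
    -- the excluded point q₀ = [0:1:0]
    let q0 : Fin 3 → K := fun i => if i = 1 then 1 else 0
    let S : Set (Fin 3 → K) :=
      {π | π ≠ 0 ∧ (∀ i, π i ∈ K') ∧ ¬∃ c : K, π = c • q0}
    -- the lines of P²(K') not through q₀ are a·x₀ + x₁ + b·x₂, (a,b) ∈ K'²
    let line : K' × K' → MvPolynomial (Fin 3) K :=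
      fun ab => C (ab.1 : K) * X 0 + X 1 + C (ab.2 : K) * X 2
    let P : MvPolynomial (Fin 3) K := ∏ ab : K' × K', line ab
    P.totalDegree = (p ^ s) ^ 2 ∧
    (∀ π ∈ S, Nat.card {ab : K' × K' // eval π (line ab) = 0} = p ^ s) ∧
    P ∈ ⨅ π ∈ S, (pointIdeal π) ^ (p ^ s) :=
  stmt9_general p s K K' hcard
end

section
/- Let K be a field of characteristic p > 0 containing the prime field K' = F_p, and let C = ∩_{(a₁,…,a_N) ∈ (F_p)^N} (x₁ - a₁x₀, …, x_N - a_Nx₀) ⊆ K[x₀,…,x_N] be the ideal of the grid of p^N points with prime-field coordinates in affine N-space. Then C equals the complete intersection ideal C' = (x₁(x₁^{p-1} - x₀^{p-1}), …, x_N(x_N^{p-1} - x₀^{p-1})). -/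
/-!
Sending `x₀ ↦ t` and `xᵢ ↦ yᵢ` identifies `K[x₀, …, x_N]` with `K[t][y₁, …, y_N]` and turns the ideal
`(xᵢ - aᵢ x₀)ᵢ` of the point `[1 : a]` into the ideal of the point `(aᵢ t)ᵢ` of the grid `G^N`, where
`G = {c t | c ∈ 𝔽_p} ⊆ K[t]`. Over the domain `K[t]`, the combinatorial Nullstellensatz shows that the
ideal of the finite grid `G^N` is generated by the polynomials `∏_{r ∈ G} (yᵢ - r)`, and
`∏_{c ∈ 𝔽_p} (y - c t) = y^p - y t^(p-1)` is the homogenization of `X^p - X = ∏_{c ∈ 𝔽_p} (X - c)`.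
-/

open MvPolynomial
open scoped Polynomial

theorem FiniteField.X_pow_card_sub_X_eq_prod (F : Type*) [Field F] [Fintype F] :
    (Polynomial.X ^ Fintype.card F - Polynomial.X : F[X]) =
      ∏ a : F, (Polynomial.X - Polynomial.C a) := by
  have hmonic : (Polynomial.X ^ Fintype.card F - Polynomial.X : F[X]).Monic :=
    Polynomial.monic_X_pow_sub (by
      rw [Polynomial.degree_X]; exact_mod_cast Fintype.one_lt_card (α := F))
  rw [← Polynomial.prod_multiset_X_sub_C_of_monic_of_roots_card_eq hmonic, roots_X_pow_card_sub_X]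
  · rfl
  rw [roots_X_pow_card_sub_X, X_pow_card_sub_X_natDegree_eq _ Fintype.one_lt_card]
  rfl

theorem prod_sub_castHom_mul_eq (p : ℕ) [hp : Fact p.Prime] {A : Type*} [CommRing A] [CharP A p]
    (x y : A) :
    ∏ c : ZMod p, (x - ZMod.castHom (dvd_refl p) A c * y) = x ^ p - x * y ^ (p - 1) := by
  have hprod : (∏ c : ZMod p, (Polynomial.X - Polynomial.C c)).homogenize p =
      ∏ c : ZMod p, (Polynomial.X - Polynomial.C c).homogenize 1 := by
    have h := Polynomial.homogenize_finsetProd (s := Finset.univ) (n := fun _ => 1)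
      (fun c _ => Polynomial.natDegree_X_sub_C_le (c : ZMod p))
    rwa [Finset.sum_const, Finset.card_univ, ZMod.card, smul_eq_mul, mul_one] at h
  have h := FiniteField.X_pow_card_sub_X_eq_prod (ZMod p)
  rw [ZMod.card] at h
  replace h := congrArg (eval₂ (ZMod.castHom (dvd_refl p) A) (![x, y] : Fin 2 → A))
    (congrArg (Polynomial.homogenize · p) h)
  simp only [hprod, Polynomial.homogenize_sub, Polynomial.homogenize_X_pow le_rfl,
    Polynomial.homogenize_X hp.out.ne_zero, Polynomial.homogenize_X one_ne_zero,
    Polynomial.homogenize_C] at h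
  simpa using h.symm

theorem ZMod.range_castHom (n : ℕ) [NeZero n] (R : Type*) [Ring R] [CharP R n] :
    Set.range (ZMod.castHom (dvd_refl n) R) = Set.range (Nat.cast : ℕ → R) := by
  ext x
  constructor
  · rintro ⟨c, rfl⟩
    exact ⟨c.val, by rw [← map_natCast (ZMod.castHom (dvd_refl n) R), ZMod.natCast_zmod_val]⟩
  · rintro ⟨k, rfl⟩
    exact ⟨k, map_natCast _ k⟩

theorem Ideal.map_iInf_of_equiv {R S : Type*} [Semiring R] [Semiring S] {ι : Sort*} (e : R ≃+* S)
    (I : ι → Ideal R) : (⨅ i, I i).map e = ⨅ i, (I i).map e := by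
  simp only [← Ideal.comap_symm, Ideal.comap_iInf]

namespace MvPolynomial

section FinSuccEquivRight

variable (R : Type*) [CommSemiring R] (n : ℕ)

noncomputable def finSuccEquivRight : MvPolynomial (Fin (n + 1)) R ≃ₐ[R] MvPolynomial (Fin n) R[X] :=
  (renameEquiv R (_root_.finSuccEquiv n)).trans (optionEquivRight R (Fin n))

variable {R n}

@[simp]
theorem finSuccEquivRight_X_zero : finSuccEquivRight R n (X 0) = C Polynomial.X := by
  simp [finSuccEquivRight]

@[simp]
theorem finSuccEquivRight_X_succ (i : Fin n) : finSuccEquivRight R n (X i.succ) = X i := by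
  simp [finSuccEquivRight]

@[simp]
theorem finSuccEquivRight_C (a : R) : finSuccEquivRight R n (C a) = C (Polynomial.C a) := by
  simp [finSuccEquivRight]

end FinSuccEquivRight

section Grid

variable {R σ : Type*} [CommRing R]

theorem eval_eq_zero_of_mem_span_X_sub_C {s : σ → R} {f : MvPolynomial σ R}
    (hf : f ∈ Ideal.span (Set.range fun i => X i - C (s i))) : eval s f = 0 := by
  have hle : Ideal.span (Set.range fun i => X i - C (s i)) ≤ RingHom.ker (eval s) := by
    rw [Ideal.span_le]
    rintro _ ⟨i, rfl⟩
    simp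
  exact hle hf

theorem iInf_span_X_sub_C_eq_span_prod [IsDomain R] [Finite σ] (S : σ → Finset R) :
    ⨅ (s : σ → R) (_ : ∀ i, s i ∈ S i), Ideal.span (Set.range fun i => X i - C (s i)) =
      Ideal.span (Set.range fun i => ∏ r ∈ S i, (X i - C r)) := by
  apply le_antisymm
  · intro f hf
    by_cases hS : ∀ i, (S i).Nonempty
    · obtain ⟨h, -, rfl⟩ := combinatorial_nullstellensatz_exists_linearCombination S hS f
        fun s hs => eval_eq_zero_of_mem_span_X_sub_C (Ideal.mem_iInf.1 (Ideal.mem_iInf.1 hf s) hs)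
      rw [Ideal.span, ← Finsupp.range_linearCombination]
      exact LinearMap.mem_range_self _ h
    · push Not at hS
      obtain ⟨i, hi⟩ := hS
      have hone : (1 : MvPolynomial σ R) ∈
          Ideal.span (Set.range fun i => ∏ r ∈ S i, (X i - C r)) := by
        have := Ideal.subset_span (Set.mem_range_self (f := fun i => ∏ r ∈ S i, (X i - C r)) i)
        rwa [hi, Finset.prod_empty] at this
      rw [Ideal.eq_top_of_isUnit_mem _ hone isUnit_one]
      exact Submodule.mem_top
  · refine le_iInf₂ fun s hs => Ideal.span_le.2 ?_
    rintro _ ⟨i, rfl⟩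
    exact Ideal.mem_of_dvd _ (Finset.dvd_prod_of_mem _ (hs i))
      (Ideal.subset_span (Set.mem_range_self i))

theorem prod_X_sub_C_castHom_mul_eq (p : ℕ) [Fact p.Prime] [IsDomain R] [CharP R p]
    [DecidableEq R] (i : σ) {y : R} (hy : y ≠ 0) :
    ∏ r ∈ Finset.univ.image (fun c : ZMod p => ZMod.castHom (dvd_refl p) R c * y), (X i - C r) =
      X i ^ p - X i * C y ^ (p - 1) := by
  have hinj : Function.Injective fun c : ZMod p => ZMod.castHom (dvd_refl p) R c * y :=
    (mul_left_injective₀ hy).comp (ZMod.castHom_injective R)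
  have hC : (C : R →+* MvPolynomial σ R).comp (ZMod.castHom (dvd_refl p) R) =
      ZMod.castHom (dvd_refl p) (MvPolynomial σ R) := RingHom.ext_zmod _ _
  rw [Finset.prod_image fun c _ d _ h => hinj h, ← prod_sub_castHom_mul_eq p]
  refine Finset.prod_congr rfl fun c _ => ?_
  rw [map_mul, ← hC, RingHom.comp_apply]

end Grid

end MvPolynomial

section PrimeFieldGrid

variable (p : ℕ) (K : Type*) [Field K] [CharP K p] [DecidableEq K]

noncomputable def primeFieldMulX [NeZero p] : Finset K[X] :=
  Finset.univ.image fun c : ZMod p => ZMod.castHom (dvd_refl p) K[X] c * Polynomial.X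

variable [Fact p.Prime]

theorem coe_primeFieldMulX :
    (primeFieldMulX p K : Set K[X]) =
      (fun a => Polynomial.C a * Polynomial.X) '' Set.range (Nat.cast : ℕ → K) := by
  have hC : Polynomial.C.comp (ZMod.castHom (dvd_refl p) K) = ZMod.castHom (dvd_refl p) K[X] :=
    RingHom.ext_zmod _ _
  rw [← ZMod.range_castHom, ← Set.range_comp, primeFieldMulX, Finset.coe_image, Finset.coe_univ,
    Set.image_univ, ← hC]
  rfl

theorem map_finSuccEquivRight_iInf_span (N : ℕ) :
    Ideal.map (finSuccEquivRight K N).toRingEquiv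
        (⨅ a ∈ {a : Fin N → K | ∀ i, a i ∈ Set.range (Nat.cast : ℕ → K)},
          Ideal.span (Set.range fun i : Fin N => X i.succ - C (a i) * X 0)) =
      ⨅ (s : Fin N → K[X]) (_ : ∀ i, s i ∈ primeFieldMulX p K),
        Ideal.span (Set.range fun i => X i - C (s i)) := by
  have hgrid : {s : Fin N → K[X] | ∀ i, s i ∈ primeFieldMulX p K} =
      (fun a i => Polynomial.C (a i) * Polynomial.X) ''
        {a : Fin N → K | ∀ i, a i ∈ Set.range (Nat.cast : ℕ → K)} := by
    have := Set.piMap_image_univ_pi (fun (_ : Fin N) a => Polynomial.C a * Polynomial.X)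
      (fun _ => Set.range (Nat.cast : ℕ → K))
    rw [← coe_primeFieldMulX] at this
    convert this.symm using 2 <;> ext <;> simp
  change _ = ⨅ s ∈ {s : Fin N → K[X] | ∀ i, s i ∈ primeFieldMulX p K}, _
  simp only [Ideal.map_iInf_of_equiv, Ideal.map_span, ← Set.range_comp, hgrid, iInf_image]
  congr! with a _ i
  simp

theorem map_finSuccEquivRight_span (N : ℕ) :
    Ideal.map (finSuccEquivRight K N).toRingEquiv
        (Ideal.span (Set.range fun i : Fin N =>
          X i.succ * (X i.succ ^ (p - 1) - X 0 ^ (p - 1)))) =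
      Ideal.span (Set.range fun i => ∏ r ∈ primeFieldMulX p K, (X i - C r)) := by
  rw [Ideal.map_span, ← Set.range_comp]
  congr! with i
  rw [primeFieldMulX, prod_X_sub_C_castHom_mul_eq p i Polynomial.X_ne_zero]
  simp [mul_sub, mul_pow_sub_one (Fact.out : p.Prime).ne_zero]

end PrimeFieldGrid

theorem stmt10_general (p N : ℕ) (hp : p.Prime)
    (K : Type) [Field K] [CharP K p] :
    (⨅ a ∈ {a : Fin N → K | ∀ i, a i ∈ Set.range (Nat.cast : ℕ → K)},
      Ideal.span (Set.range fun i : Fin N =>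
        (X i.succ - C (a i) * X 0 : MvPolynomial (Fin (N + 1)) K))) =
    Ideal.span (Set.range fun i : Fin N =>
      (X i.succ * (X i.succ ^ (p - 1) - X 0 ^ (p - 1)) :
        MvPolynomial (Fin (N + 1)) K)) := by
  classical
  have := Fact.mk hp
  let e := (finSuccEquivRight K N).toRingEquiv
  apply Ideal.comap_injective_of_surjective _ e.symm.surjective
  rw [Ideal.comap_symm, Ideal.comap_symm, map_finSuccEquivRight_iInf_span p,
    map_finSuccEquivRight_span p, iInf_span_X_sub_C_eq_span_prod]

theorem stmt10 (p N : ℕ) (hp : p.Prime) (hN : 1 ≤ N)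
    (K : Type) [Field K] [CharP K p] :
    (⨅ a ∈ {a : Fin N → K | ∀ i, a i ∈ Set.range (Nat.cast : ℕ → K)},
      Ideal.span (Set.range fun i : Fin N =>
        (X i.succ - C (a i) * X 0 : MvPolynomial (Fin (N + 1)) K))) =
    Ideal.span (Set.range fun i : Fin N =>
      (X i.succ * (X i.succ ^ (p - 1) - X 0 ^ (p - 1)) :
        MvPolynomial (Fin (N + 1)) K)) :=
  stmt10_general p N hp K
end

section
/- Let p be an odd prime, K a field of characteristic p with prime field K', N = (p+1)/2, and let I ⊆ K[x₀,…,x_N] be the ideal of all K'-points of P^N except q = [1:0:⋯:0]. Then the form G = x₀(x₀^{p-1} - x_N^{p-1})(N x₀^{p-1} + Σ_{i=1}^{N-1} x_i^{p-1}) · Q_{p-1}(x₀^{p-1},…,x_N^{p-1}) has degree p², does not vanish at q, and lies in the symbolic power I^{((p+3)/2)}. -/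
/-!
Put `yᵢ = xᵢ^(p-1)`. In characteristic `p`, `(1 + y z)^(p-1) ≡ 1/(1 + y z) mod z^p`, so
`Q_{p-1}(y)` is the complete homogeneous symmetric polynomial `h_{p-1}(y)` (the sign
`(-1)^(p-1)` is `1`).

Let `π` be an `𝔽_p`-point with `k ≥ 2` nonzero coordinates. The `yᵢ` with `πᵢ ≠ 0` are
congruent to each other modulo `I(π)` (Fermat), and the other `yᵢ` lie in `I(π)^(p-1)`. In the
Taylor expansion `h_s(t + u₁, …, t + u_k) = ∑ⱼ C(s+k-1, s-j) t^(s-j) hⱼ(u)` at `s = p - 1` the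
binomial coefficients with `j ≤ p - k` are divisible by `p`, hence `Q_{p-1}(y) ∈ I(π)^(p-k+1)`.
This is `I(π)^(N+1)` as long as `k < N`; the missing order for `k = N, N + 1` comes from the
other factors: `x₀` vanishes at `π` if `π₀ = 0`, `x₀^(p-1) - x_N^(p-1)` if `π₀ π_N ≠ 0`, and
`N x₀^(p-1) + ∑ xᵢ^(p-1)` if `π₀, …, π_{N-1}` are nonzero, since it then takes the value
`N + (N - 1) = p`. If `k = 1`, the point is a coordinate point `eᵢ` with `i ≠ 0`, and `x₀` times
one of the last two factors already vanishes to order `p`.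
-/

open MvPolynomial

lemma Ideal.mul_mem_pow_add {R : Type*} [CommRing R] {I : Ideal R} {a b : R} {i j : ℕ}
    (ha : a ∈ I ^ i) (hb : b ∈ I ^ j) : a * b ∈ I ^ (i + j) :=
  pow_add I i j ▸ Ideal.mul_mem_mul ha hb

lemma natCast_pow_sub_one_eq_one {K : Type*} [Field K] {p : ℕ} [Fact p.Prime] [CharP K p]
    {a : K} (ha : a ∈ Set.range (Nat.cast : ℕ → K)) (h0 : a ≠ 0) : a ^ (p - 1) = 1 := by
  obtain ⟨a, rfl⟩ := ha
  rw [← map_natCast (ZMod.castHom (dvd_refl p) K)] at h0 ⊢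
  rw [← map_pow, ZMod.pow_card_sub_one_eq_one (fun h => h0 (by rw [h, map_zero])), map_one]

section TaylorIdeal

variable {R : Type*} [CommRing R] (I : Ideal R) (t : R)

/-- If `x₁, …, x_k ≡ t mod I` and `n = s + k - 1`, then `h_s(x)` lies in this ideal: this is
what survives of the Taylor expansion `h_s(t + u) = ∑ⱼ C(n, s-j) t^(s-j) hⱼ(u)`. -/
def taylorIdeal (n s : ℕ) : Ideal R :=
  ⨆ j ≤ s, Ideal.span {((n.choose (s - j) : ℕ) : R) * t ^ (s - j)} * I ^ j

lemma mul_taylorIdeal_le (n s : ℕ) : I * taylorIdeal I t n s ≤ taylorIdeal I t n (s + 1) := by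
  simp only [taylorIdeal, Ideal.mul_iSup]
  refine iSup₂_le fun j hj => le_iSup₂_of_le (j + 1) (by omega) ?_
  rw [Nat.add_sub_add_right, pow_succ', mul_left_comm]

lemma mem_taylorIdeal {n s j : ℕ} (hj : j ≤ s) {v : R} (hv : v ∈ I ^ j) :
    (n.choose (s - j) : R) * t ^ (s - j) * v ∈ taylorIdeal I t n s :=
  Ideal.mem_iSup_of_mem j <| Ideal.mem_iSup_of_mem hj <|
    Ideal.mul_mem_mul (Ideal.mem_span_singleton_self _) hv

lemma taylorIdeal_zero (n : ℕ) : taylorIdeal I t n 0 = ⊤ :=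
  (Ideal.eq_top_iff_one _).2 <| by
    simpa using mem_taylorIdeal I t (n := n) le_rfl (v := 1) (by simp)

lemma taylorIdeal_le_pow {p k : ℕ} [hp : Fact p.Prime] [CharP R p] (hk : 2 ≤ k) (hkp : k ≤ p) :
    taylorIdeal I t (p + k - 2) (p - 1) ≤ I ^ (p - k + 1) := by
  refine iSup₂_le fun j hj => ?_
  by_cases hjk : j ≤ p - k
  · have : ((p + k - 2).choose (p - 1 - j) : R) = 0 :=
      (CharP.cast_eq_zero_iff R p _).2 (hp.out.dvd_choose (by omega) (by omega) (by omega))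
    simp [this]
  · exact Ideal.mul_le_right.trans (Ideal.pow_le_pow_right (by omega))

end TaylorIdeal

namespace PowerSeries

variable {R : Type*} [CommRing R]

noncomputable def geomSeries (x : R) : R⟦X⟧ := rescale x (mk 1)

@[simp] lemma coeff_geomSeries (x : R) (n : ℕ) : coeff n (geomSeries x) = x ^ n := by
  simp [geomSeries, coeff_rescale]

lemma one_sub_C_mul_X_mul_geomSeries (x : R) : (1 - C x * X) * geomSeries x = 1 := by
  rw [geomSeries, ← rescale_X, ← map_one (rescale x), ← map_sub, ← map_mul, mul_comm,
    mk_one_mul_one_sub_eq_one, map_one]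

lemma geomSeries_sub_geomSeries (x t : R) :
    geomSeries x - geomSeries t = C (x - t) * X * (geomSeries x * geomSeries t) := by
  rw [map_sub]
  linear_combination (geomSeries t) * one_sub_C_mul_X_mul_geomSeries x -
    (geomSeries x) * one_sub_C_mul_X_mul_geomSeries t

lemma coeff_geomSeries_pow (t : R) (d s : ℕ) :
    coeff s (geomSeries t ^ (d + 1)) = (d + s).choose d * t ^ s := by
  rw [geomSeries, ← map_pow, mk_one_pow_eq_mk_choose_add, coeff_rescale, coeff_mk, mul_comm]

@[simp] lemma geomSeries_zero : geomSeries (0 : R) = 1 := by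
  ext n; cases n <;> simp

lemma map_geomSeries {S : Type*} [CommRing S] (f : R →+* S) (x : R) :
    map f (geomSeries x) = geomSeries (f x) := by
  ext n; simp

/-- `∏_{x ∈ m} 1/(1 - x X)`, whose coefficients are the complete homogeneous symmetric
polynomials evaluated at `m`. -/
noncomputable def hSeries (m : Multiset R) : R⟦X⟧ := (m.map geomSeries).prod

@[simp] lemma hSeries_cons (x : R) (m : Multiset R) :
    hSeries (x ::ₘ m) = geomSeries x * hSeries m := by
  simp [hSeries]

lemma hSeries_add (m m' : Multiset R) : hSeries (m + m') = hSeries m * hSeries m' := by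
  simp [hSeries]

lemma hSeries_replicate (b : ℕ) (t : R) : hSeries (Multiset.replicate b t) = geomSeries t ^ b := by
  simp [hSeries]

lemma hSeries_cons_eq_hSeries_cons_add (x t : R) (m : Multiset R) :
    hSeries (x ::ₘ m) = hSeries (t ::ₘ m) + C (x - t) * X * hSeries (x ::ₘ t ::ₘ m) := by
  simp only [hSeries_cons]
  linear_combination (hSeries m) * geomSeries_sub_geomSeries x t

lemma map_hSeries {S : Type*} [CommRing S] (f : R →+* S) (m : Multiset R) :
    map f (hSeries m) = hSeries (m.map f) := by
  simp [hSeries, map_multiset_prod, map_geomSeries]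

variable (I : Ideal R) (t : R)

lemma coeff_hSeries_replicate_mem_taylorIdeal {n s : ℕ} (hs : s ≤ n) :
    coeff s (hSeries (Multiset.replicate (n - s + 1) t)) ∈ taylorIdeal I t n s := by
  rw [hSeries_replicate, coeff_geomSeries_pow, Nat.sub_add_cancel hs, Nat.choose_symm hs]
  simpa using mem_taylorIdeal I t (n := n) (Nat.zero_le s) (v := 1) (by simp)

lemma coeff_hSeries_mem_taylorIdeal {n : ℕ} (s : ℕ) (m : Multiset R)
    (hm : ∀ x ∈ m, x - t ∈ I) (hcard : Multiset.card m + s = n + 1) :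
    coeff s (hSeries m) ∈ taylorIdeal I t n s := by
  induction s generalizing m with
  | zero => simp [taylorIdeal_zero]
  | succ s ih =>
    -- Padding with copies of `t` keeps `card + s` fixed along `hSeries_cons_eq_hSeries_cons_add`.
    suffices ∀ (m' : Multiset R) (b : ℕ), (∀ x ∈ m', x - t ∈ I) →
        Multiset.card m' + b + (s + 1) = n + 1 →
        coeff (s + 1) (hSeries (m' + Multiset.replicate b t)) ∈ taylorIdeal I t n (s + 1) by
      simpa using this m 0 hm (by simpa using hcard)
    intro m'
    induction m' using Multiset.induction_on with
    | empty =>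
      intro b _ hb
      rw [Multiset.card_zero, zero_add] at hb
      rcases b with _ | b
      · simp [hSeries]
      obtain rfl : b = n - (s + 1) := by omega
      simpa using coeff_hSeries_replicate_mem_taylorIdeal I t (by omega : s + 1 ≤ n)
    | cons x m' ihm =>
      intro b hx hb
      rw [Multiset.cons_add, hSeries_cons_eq_hSeries_cons_add x t, map_add, mul_assoc,
        coeff_C_mul, coeff_succ_X_mul]
      refine add_mem ?_
        (mul_taylorIdeal_le I t n s (Ideal.mul_mem_mul (hx x (by simp)) (ih _ ?_ ?_)))
      · have := ihm (b + 1) (fun y hy => hx y (by simp [hy])) (by simp at hb ⊢; omega)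
        rwa [Multiset.replicate_succ, Multiset.add_cons] at this
      · intro y hy
        simp only [Multiset.mem_cons, Multiset.mem_add, Multiset.mem_replicate] at hy
        rcases hy with rfl | rfl | hy | ⟨-, rfl⟩
        · exact hx y (by simp)
        · simp
        · exact hx y (by simp [hy])
        · simp
      · simp at hb ⊢; omega

theorem coeff_hSeries_mem_pow {p : ℕ} [Fact p.Prime] [CharP R p] {m : Multiset R}
    (hk : 2 ≤ Multiset.card m) (hkp : Multiset.card m ≤ p) (hm : ∀ x ∈ m, x - t ∈ I) :
    coeff (p - 1) (hSeries m) ∈ I ^ (p - Multiset.card m + 1) :=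
  taylorIdeal_le_pow I t hk hkp (coeff_hSeries_mem_taylorIdeal I t _ m hm (by omega))

lemma coeff_hSeries_add_sub_mem {J : Ideal R} (m : Multiset R) {m' : Multiset R}
    (hm' : ∀ x ∈ m', x ∈ J) (n : ℕ) :
    coeff n (hSeries (m + m')) - coeff n (hSeries m) ∈ J := by
  have h : m'.map (Ideal.Quotient.mk J) = Multiset.replicate (Multiset.card m') 0 := by
    rw [Multiset.eq_replicate]
    simpa using fun x hx => Ideal.Quotient.eq_zero_iff_mem.2 (hm' x hx)
  rw [← Ideal.Quotient.eq, ← coeff_map, ← coeff_map, hSeries_add, map_mul,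
    map_hSeries (m := m'), h, hSeries_replicate, geomSeries_zero, one_pow, mul_one]

lemma rescale_geomSeries (a x : R) : rescale a (geomSeries x) = geomSeries (a * x) := by
  ext n; simp [mul_pow]

lemma hSeries_map {ι : Type*} (s : Finset ι) (y : ι → R) :
    hSeries (s.val.map y) = ∏ i ∈ s, geomSeries (y i) := by
  rw [hSeries, Multiset.map_map, Finset.prod_eq_multiset_prod]
  rfl

lemma X_pow_dvd_one_add_C_mul_X_pow_sub_geomSeries {p : ℕ} [Fact p.Prime] [CharP R p] (a : R) :
    X ^ p ∣ (1 + C a * X) ^ (p - 1) - geomSeries (-a) := by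
  have := charP_of_injective_ringHom (C_injective (R := R)) p
  have hp := (Fact.out : p.Prime).one_le
  have h : (1 + C a * X) * geomSeries (-a) = 1 := by
    simpa using one_sub_C_mul_X_mul_geomSeries (-a)
  refine ⟨C (a ^ p) * geomSeries (-a), ?_⟩
  calc (1 + C a * X) ^ (p - 1) - geomSeries (-a)
      = (1 + C a * X) ^ (p - 1) * ((1 + C a * X) * geomSeries (-a)) - geomSeries (-a) := by
        rw [h, mul_one]
    _ = ((1 + C a * X) ^ p - 1) * geomSeries (-a) := by
        conv_rhs => rw [← Nat.sub_add_cancel hp, pow_succ]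
        ring
    _ = X ^ p * (C (a ^ p) * geomSeries (-a)) := by
        rw [add_pow_char, one_pow, mul_pow, ← map_pow]
        ring

end PowerSeries

namespace MvPolynomial

variable {σ R A : Type*} [CommRing R] [CommRing A] [Algebra R A]

lemma coeff_aeval_C_mul_X (y : σ → A) (f : MvPolynomial σ R) (d : ℕ) :
    PowerSeries.coeff d (aeval (fun i => PowerSeries.C (y i) * PowerSeries.X) f) =
      aeval y (homogeneousComponent d f) := by
  induction f using MvPolynomial.induction_on' with
  | monomial s c =>
    have h : s.prod (fun i k => (PowerSeries.C (y i) * PowerSeries.X) ^ k) =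
        PowerSeries.C (s.prod fun i k => y i ^ k) * PowerSeries.X ^ s.degree := by
      simp only [Finsupp.prod, mul_pow, Finset.prod_mul_distrib, map_prod, map_pow,
        Finset.prod_pow_eq_pow_sum, Finsupp.degree_apply]
    rw [homogeneousComponent_of_mem (isHomogeneous_monomial c rfl), aeval_monomial, h,
      PowerSeries.algebraMap_apply, ← mul_assoc, ← map_mul, PowerSeries.coeff_C_mul_X_pow]
    split_ifs <;> simp [aeval_monomial]
  | add f g hf hg => simp only [map_add, hf, hg]

theorem aeval_homogeneousComponent_prod_X_add_one_pow [Fintype σ] {p : ℕ} [Fact p.Prime]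
    (hodd : Odd p) [CharP A p] (y : σ → A) :
    aeval y (homogeneousComponent (p - 1) ((∏ i, (X i + 1 : MvPolynomial σ R)) ^ (p - 1))) =
      PowerSeries.coeff (p - 1) (PowerSeries.hSeries (Finset.univ.val.map y)) := by
  have hmod : ∏ i, (1 + PowerSeries.C (y i) * PowerSeries.X) ^ (p - 1) ≡
      ∏ i, PowerSeries.geomSeries (-y i)
        [SMOD Ideal.span {(PowerSeries.X : PowerSeries A) ^ p}] :=
    SModEq.prod fun i _ => SModEq.sub_mem.2 <| Ideal.mem_span_singleton.2 <|
      PowerSeries.X_pow_dvd_one_add_C_mul_X_pow_sub_geomSeries (y i)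
  obtain ⟨r, hr⟩ := Ideal.mem_span_singleton.1 (SModEq.sub_mem.1 hmod)
  have hneg : ∏ i, PowerSeries.geomSeries (-y i) =
      PowerSeries.rescale (-1) (∏ i, PowerSeries.geomSeries (y i)) := by
    simp [map_prod, PowerSeries.rescale_geomSeries]
  rw [← coeff_aeval_C_mul_X, PowerSeries.hSeries_map, ← sub_eq_zero]
  simp only [map_pow, map_prod, map_add, aeval_X, map_one, ← Finset.prod_pow,
    add_comm _ (1 : PowerSeries A)]
  have hp := (Fact.out : p.Prime).one_le
  rw [← sub_add_cancel (∏ i, _) (∏ i, PowerSeries.geomSeries (-y i)), hr, hneg, map_add,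
    PowerSeries.coeff_X_pow_mul', if_neg (by omega), PowerSeries.coeff_rescale,
    (Nat.Odd.sub_odd hodd odd_one).neg_one_pow]
  ring

end MvPolynomial

noncomputable def formQ (K σ : Type*) [CommRing K] [Fintype σ] (p : ℕ) : MvPolynomial σ K :=
  aeval (fun i => X i ^ (p - 1))
    (homogeneousComponent (p - 1) ((∏ i, (X i + 1 : MvPolynomial σ K)) ^ (p - 1)))

lemma formQ_eq_coeff_hSeries {K σ : Type*} [CommRing K] [Fintype σ] {p : ℕ} [Fact p.Prime] [CharP K p]
    (hodd : Odd p) :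
    formQ K σ p = PowerSeries.coeff (p - 1)
      (PowerSeries.hSeries (Finset.univ.val.map fun i => (X i : MvPolynomial σ K) ^ (p - 1))) :=
  aeval_homogeneousComponent_prod_X_add_one_pow hodd _

lemma eval_formQ_single {K σ : Type*} [Field K] [Fintype σ] [DecidableEq σ] {p : ℕ}
    [Fact p.Prime] [CharP K p] (hodd : Odd p) (i₀ : σ) :
    eval (fun i => if i = i₀ then 1 else 0) (formQ K σ p) = 1 := by
  have hp : p - 1 ≠ 0 := Nat.sub_ne_zero_of_lt (Fact.out : p.Prime).one_lt
  rw [formQ_eq_coeff_hSeries hodd, ← PowerSeries.coeff_map, PowerSeries.map_hSeries, Multiset.map_map,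
    PowerSeries.hSeries_map, Finset.prod_eq_single i₀ (fun i _ hi => by simp [hi, zero_pow hp])
    (by simp)]
  simp

open Finset

section PointIdeal

variable {K : Type} [Field K] {n : ℕ} (π : Fin n → K)

lemma mem_pointIdeal {f : MvPolynomial (Fin n) K} {d : ℕ} (hf : f.IsHomogeneous d)
    (h : eval π f = 0) : f ∈ pointIdeal π :=
  Ideal.subset_span ⟨⟨d, hf⟩, h⟩

lemma X_mem_pointIdeal {i : Fin n} (h : π i = 0) : X i ∈ pointIdeal π :=
  mem_pointIdeal π (isHomogeneous_X K i) (by simpa using h)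

lemma X_pow_sub_X_pow_mem_pointIdeal {i j : Fin n} {d : ℕ} (h : π i ^ d = π j ^ d) :
    X i ^ d - X j ^ d ∈ pointIdeal π :=
  mem_pointIdeal π ((isHomogeneous_X_pow i d).sub (isHomogeneous_X_pow j d)) (by simp [h])

lemma formQ_mem_pointIdeal_pow [DecidableEq K] {p : ℕ} [Fact p.Prime] [CharP K p] (hodd : Odd p)
    (hπ : ∀ i, π i ≠ 0 → π i ^ (p - 1) = 1) (hk : 2 ≤ #{i | π i ≠ 0})
    (hkp : #{i | π i ≠ 0} ≤ p) :
    formQ K (Fin n) p ∈ pointIdeal π ^ (p - #{i | π i ≠ 0} + 1) := by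
  set A : Finset (Fin n) := {i | π i ≠ 0}
  set y : Fin n → MvPolynomial (Fin n) K := fun i => X i ^ (p - 1)
  obtain ⟨j, hj⟩ : A.Nonempty := Finset.card_pos.1 (by omega)
  have hsplit : Finset.univ.val.map y = A.val.map y + ({i | π i = 0} : Finset _).val.map y := by
    rw [← Multiset.map_add, ← Multiset.filter_add_not (fun i => π i ≠ 0) univ.val]
    simp [A, Finset.filter_val]
  have hA : ∀ x ∈ A.val.map y, x - y j ∈ pointIdeal π := by
    simp only [Multiset.mem_map]
    rintro _ ⟨i, hi, rfl⟩
    have hi : π i ≠ 0 := by simpa [A] using hi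
    exact X_pow_sub_X_pow_mem_pointIdeal π (by rw [hπ i hi, hπ j (mem_filter.1 hj).2])
  have hZ : ∀ x ∈ ({i | π i = 0} : Finset _).val.map y, x ∈ pointIdeal π ^ (p - #A + 1) := by
    simp only [Multiset.mem_map]
    rintro _ ⟨i, hi, rfl⟩
    exact Ideal.pow_le_pow_right (by omega)
      (Ideal.pow_mem_pow (X_mem_pointIdeal π (by simpa using hi)) _)
  rw [formQ_eq_coeff_hSeries hodd, hsplit, ← sub_add_cancel (PowerSeries.coeff _ _)
    (PowerSeries.coeff (p - 1) (PowerSeries.hSeries (A.val.map y)))]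
  refine add_mem (PowerSeries.coeff_hSeries_add_sub_mem _ hZ _) ?_
  simpa using PowerSeries.coeff_hSeries_mem_pow _ (y j) (by simpa using hk) (by simpa using hkp) hA

end PointIdeal

section Form

variable (K : Type) [Field K] (p N : ℕ)

noncomputable def formC : MvPolynomial (Fin (N + 1)) K :=
  (N : MvPolynomial (Fin (N + 1)) K) * X 0 ^ (p - 1) +
    ∑ i ∈ Ioo (0 : Fin (N + 1)) (Fin.last N), X i ^ (p - 1)

noncomputable def formL : MvPolynomial (Fin (N + 1)) K :=
  X 0 * (X 0 ^ (p - 1) - X (Fin.last N) ^ (p - 1)) * formC K p N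

noncomputable def formG : MvPolynomial (Fin (N + 1)) K :=
  formL K p N * formQ K (Fin (N + 1)) p

variable {K p N}

lemma isHomogeneous_formC : (formC K p N).IsHomogeneous (p - 1) := by
  refine IsHomogeneous.add ?_ (IsHomogeneous.sum _ _ _ fun i _ => isHomogeneous_X_pow i _)
  simpa using (isHomogeneous_X_pow (R := K) (0 : Fin (N + 1)) (p - 1)).C_mul (N : K)

lemma isHomogeneous_formG (hp : 1 ≤ p) : (formG K p N).IsHomogeneous (p ^ 2) := by
  have hQ : (formQ K (Fin (N + 1)) p).IsHomogeneous ((p - 1) * (p - 1)) :=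
    (homogeneousComponent_isHomogeneous _ _).aeval _ fun i => isHomogeneous_X_pow i _
  have h : (formG K p N).IsHomogeneous (1 + (p - 1) + (p - 1) + (p - 1) * (p - 1)) :=
    (((isHomogeneous_X K 0).mul ((isHomogeneous_X_pow _ _).sub (isHomogeneous_X_pow _ _))).mul
      isHomogeneous_formC).mul hQ
  convert h using 1
  zify [hp]
  ring

lemma eval_formG [Fact p.Prime] [CharP K p] (hodd : Odd p) (hN : 0 < N) :
    eval (fun i => if i = 0 then 1 else 0) (formG K p N) = N := by
  have hp : p - 1 ≠ 0 := Nat.sub_ne_zero_of_lt (Fact.out : p.Prime).one_lt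
  have hlast : Fin.last N ≠ 0 := Fin.ext_iff.not.2 (by simp; omega)
  simp [formG, formL, formC, eval_formQ_single hodd, hlast, zero_pow hp]

variable {π : Fin (N + 1) → K}

lemma formC_mem_pointIdeal [CharP K p] (hN : 2 * N = p + 1)
    (hπ : ∀ i ≠ Fin.last N, π i ^ (p - 1) = 1) : formC K p N ∈ pointIdeal π := by
  refine mem_pointIdeal π isHomogeneous_formC ?_
  have hmid : ∀ i ∈ Ioo 0 (Fin.last N), π i ^ (p - 1) = 1 := fun i hi =>
    hπ i (Finset.mem_Ioo.1 hi).2.ne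
  have h0 : (0 : Fin (N + 1)) ≠ Fin.last N := Fin.ext_iff.not.2 (by simp; omega)
  simp only [formC, map_add, map_mul, map_natCast, map_pow, eval_X, map_sum, hπ 0 h0,
    Finset.sum_congr rfl hmid]
  simp only [Finset.sum_const, Fin.card_Ioo, Fin.val_last, Fin.val_zero, nsmul_eq_mul, mul_one]
  rw [← Nat.cast_add, (by omega : N + (N - 0 - 1) = p), CharP.cast_eq_zero]

lemma formC_mem_pointIdeal_pow (hN : 0 < N) (hπ : ∀ i ≠ Fin.last N, π i = 0) :
    formC K p N ∈ pointIdeal π ^ (p - 1) := by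
  have hX : ∀ i ≠ Fin.last N, X i ^ (p - 1) ∈ pointIdeal π ^ (p - 1) := fun i hi =>
    Ideal.pow_mem_pow (X_mem_pointIdeal π (hπ i hi)) _
  exact add_mem (Ideal.mul_mem_left _ _ (hX 0 (Fin.ext_iff.not.2 (by simp; omega))))
    (sum_mem fun i hi => hX i (Finset.mem_Ioo.1 hi).2.ne)

lemma formL_mem_pointIdeal_pow_of_support_eq (hN : 0 < N) {i : Fin (N + 1)} (hi : i ≠ 0)
    (hπ : ∀ j, π j ≠ 0 ↔ j = i) : formL K p N ∈ pointIdeal π ^ p := by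
  have hzero : ∀ j ≠ i, π j = 0 := fun j hj => not_not.1 ((hπ j).not.2 hj)
  have hX0 : X 0 ∈ pointIdeal π ^ 1 :=
    (pow_one (pointIdeal π)).symm ▸ X_mem_pointIdeal π (hzero 0 hi.symm)
  refine Ideal.pow_le_pow_right (by omega : p ≤ 1 + (p - 1)) ?_
  rcases eq_or_ne i (Fin.last N) with rfl | hlast
  · exact Ideal.mul_mem_pow_add (Ideal.mul_mem_right _ _ hX0)
      (formC_mem_pointIdeal_pow hN hzero)
  · have hXp : ∀ j ≠ i, X j ^ (p - 1) ∈ pointIdeal π ^ (p - 1) := fun j hj =>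
      Ideal.pow_mem_pow (X_mem_pointIdeal π (hzero j hj)) _
    exact Ideal.mul_mem_right _ _
      (Ideal.mul_mem_pow_add hX0 (sub_mem (hXp 0 hi.symm) (hXp _ hlast.symm)))

lemma formL_mem_pointIdeal_of_zeros_eq [CharP K p] (hN : 2 * N = p + 1)
    (hF : ∀ i, π i ≠ 0 → π i ^ (p - 1) = 1) {j : Fin (N + 1)} (hπ : ∀ i, π i = 0 ↔ i = j) :
    formL K p N ∈ pointIdeal π := by
  have hF' : ∀ i ≠ j, π i ^ (p - 1) = 1 := fun i hi => hF i ((hπ i).not.2 hi)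
  rcases eq_or_ne j 0 with rfl | hj0
  · exact Ideal.mul_mem_right _ _ (Ideal.mul_mem_right _ _ (X_mem_pointIdeal π ((hπ 0).2 rfl)))
  rcases eq_or_ne j (Fin.last N) with rfl | hjl
  · exact Ideal.mul_mem_left _ _ (formC_mem_pointIdeal hN hF')
  · exact Ideal.mul_mem_right _ _ (Ideal.mul_mem_left _ _
      (X_pow_sub_X_pow_mem_pointIdeal π (by rw [hF' 0 hj0.symm, hF' _ hjl.symm])))

lemma formL_mem_pointIdeal_sq [CharP K p] (hN : 2 * N = p + 1) (hπ : ∀ i, π i ^ (p - 1) = 1) :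
    formL K p N ∈ pointIdeal π ^ 2 := by
  rw [formL, pow_two, mul_assoc]
  exact Ideal.mul_mem_left _ _ (Ideal.mul_mem_mul
    (X_pow_sub_X_pow_mem_pointIdeal π (by rw [hπ, hπ]))
    (formC_mem_pointIdeal hN fun i _ => hπ i))

theorem formG_mem_pointIdeal_pow [DecidableEq K] [Fact p.Prime] [CharP K p] (hodd : Odd p)
    (hN : 2 * N = p + 1) (hπ : ∀ i, π i ∈ Set.range (Nat.cast : ℕ → K))
    (hq : ∃ i ≠ 0, π i ≠ 0) : formG K p N ∈ pointIdeal π ^ (N + 1) := by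
  have hF : ∀ i, π i ≠ 0 → π i ^ (p - 1) = 1 := fun i => natCast_pow_sub_one_eq_one (hπ i)
  have hp : 3 ≤ p := by have := (Fact.out : p.Prime).two_le; have := Nat.odd_iff.1 hodd; omega
  obtain ⟨i, hi0, hi⟩ := hq
  have hcard : #{i | π i ≠ 0} + #{i | π i = 0} = N + 1 := by
    simpa using card_filter_add_card_filter_not (s := univ) (fun i => π i ≠ 0)
  rw [formG]
  rcases Nat.lt_or_ge #{i | π i ≠ 0} 2 with hk1 | hk2
  · have hsupp : ∀ j, π j ≠ 0 ↔ j = i := fun j =>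
      ⟨fun hj => (card_le_one_iff (s := {i | π i ≠ 0})).1 (by omega) (by simpa using hj)
        (by simpa using hi), by rintro rfl; exact hi⟩
    have hL : formL K p N ∈ pointIdeal π ^ p :=
      formL_mem_pointIdeal_pow_of_support_eq (by omega) hi0 hsupp
    exact Ideal.pow_le_pow_right (by omega) (Ideal.mul_mem_right _ _ hL)
  have hQ := formQ_mem_pointIdeal_pow π hodd hF hk2 (by omega)
  rcases (by omega : #{i | π i ≠ 0} < N ∨ #{i | π i = 0} = 1 ∨ #{i | π i = 0} = 0)
    with hlt | h1 | h0
  · exact Ideal.pow_le_pow_right (by omega) (Ideal.mul_mem_left _ _ hQ)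
  · obtain ⟨j, hj⟩ := card_eq_one.1 h1
    have hzeros : ∀ i, π i = 0 ↔ i = j := fun i => by simpa using Finset.ext_iff.1 hj i
    have hL : formL K p N ∈ pointIdeal π ^ 1 :=
      (pow_one (pointIdeal π)).symm ▸ formL_mem_pointIdeal_of_zeros_eq hN hF hzeros
    exact Ideal.pow_le_pow_right (by omega) (Ideal.mul_mem_pow_add hL hQ)
  · have hall : ∀ i, π i ^ (p - 1) = 1 := fun i => hF i <| by
      simpa using filter_eq_empty_iff.1 (card_eq_zero.1 h0) (mem_univ i)
    exact Ideal.pow_le_pow_right (by omega)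
      (Ideal.mul_mem_pow_add (formL_mem_pointIdeal_sq hN hall) hQ)

lemma natCast_ne_zero_of_two_mul_eq [CharP K p] (hN : 2 * N = p + 1) : (N : K) ≠ 0 := by
  intro h
  have h2 : ((2 * N : ℕ) : K) = 1 := by rw [hN, Nat.cast_succ, CharP.cast_eq_zero, zero_add]
  simp [h] at h2

end Form

theorem stmt12 (p N m : ℕ) (hp : p.Prime) (hodd : Odd p)
    (hN : 2 * N = p + 1) (hm : 2 * m = p + 3)
    (K : Type) [Field K] [CharP K p] :
    -- the excluded point q = [1:0:⋯:0]
    let q : Fin (N + 1) → K := fun i => if i = 0 then 1 else 0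
    let S : Set (Fin (N + 1) → K) :=
      {π | π ≠ 0 ∧ (∀ i, π i ∈ Set.range (Nat.cast : ℕ → K)) ∧
        ¬∃ c : K, π = c • q}
    -- Q_{p-1}, the degree-(p-1) homogeneous component of (∏(xᵢ+1))^{p-1}
    let Qc : MvPolynomial (Fin (N + 1)) K :=
      homogeneousComponent (p - 1) ((∏ i, (X i + 1)) ^ (p - 1))
    -- Q_{p-1}(x₀^{p-1},…,x_N^{p-1})
    let Qs : MvPolynomial (Fin (N + 1)) K :=
      aeval (fun i : Fin (N + 1) => (X i : MvPolynomial (Fin (N + 1)) K) ^ (p - 1)) Qc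
    let G : MvPolynomial (Fin (N + 1)) K :=
      X 0 * (X 0 ^ (p - 1) - X (Fin.last N) ^ (p - 1)) *
        ((N : MvPolynomial (Fin (N + 1)) K) * X 0 ^ (p - 1) +
          ∑ i ∈ Finset.Ioo (0 : Fin (N + 1)) (Fin.last N), X i ^ (p - 1)) * Qs
    G.totalDegree = p ^ 2 ∧ eval q G ≠ 0 ∧
      G ∈ ⨅ π ∈ S, (pointIdeal π) ^ m := by
  intro q S Qc Qs G
  classical
  have := Fact.mk hp
  obtain rfl : m = N + 1 := by omega
  have hG : G = formG K p N := rfl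
  have hGq : eval q G = N := eval_formG hodd (by omega)
  have hN0 : (N : K) ≠ 0 := natCast_ne_zero_of_two_mul_eq hN
  refine ⟨(isHomogeneous_formG hp.one_le).totalDegree fun h => hN0 ?_, hGq ▸ hN0, ?_⟩
  · rw [← hGq, hG, h, map_zero]
  simp only [Submodule.mem_iInf]
  rintro π ⟨-, hπ, hπq⟩
  refine formG_mem_pointIdeal_pow hodd hN hπ ?_
  by_contra! h
  exact hπq ⟨π 0, funext fun i => by by_cases hi : i = 0 <;> simp [q, hi, h i]⟩
end

section
/- Let K be a field of characteristic p > 0 with prime field K', N ≤ p, and let π be a point of P^N(K') with exactly t zero coordinates, where 0 ≤ t < N and p - N + t ≥ 0. Let Q_{p-1} be the degree-(p-1) homogeneous component of ∏_{i=0}^{N}(x_i+1)^{p-1}. Then Q_{p-1}(x₀^{p-1}, …, x_N^{p-1}) lies in I_π^{p-N+t}, where I_π is the ideal of π in K[x₀,…,x_N]. -/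
/-!
Put `y i = X i ^ (p - 1)`. In characteristic `p`, `(x + 1) ^ (p - 1) = ∑_{k < p} (-x) ^ k`, so
`Q_{p-1}(y)` is the complete homogeneous polynomial `h_{p-1}` evaluated at the `-y i`.
Fix `i₀` with `π i₀ ≠ 0` and let `J ⊆ I_π` be generated by the linear forms
`π i₀ X i - π i X i₀`. Since the `π i` lie in the prime field, `π i ^ (p - 1) = 1` for `π i ≠ 0`,
whence `y i ≡ y i₀ (mod J)` at the `s = N + 1 - t` nonzero coordinates of `π`, while
`y i ∈ J ^ (p - 1)` at the others. Writing `y i = w + v i` with `v i ∈ J`,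
`h_n(w + v) = ∑_k C(n + s - 1, k + s - 1) w ^ (n - k) h_k(v)` (over `s` variables).
For `n = p - 1` Lucas's theorem kills the coefficients with `k + s ≤ p`, and `h_k(v) ∈ J ^ k`
for the remaining `k`, so `Q_{p-1}(y) ∈ J ^ (p + 1 - s) = J ^ (p - N + t)`.
-/

open MvPolynomial

open Finset

theorem Finset.sum_finsuppAntidiag_eq_sum_piAntidiag {ι μ M : Type*} [DecidableEq ι]
    [AddCommMonoid μ] [HasAntidiagonal μ] [DecidableEq μ] [AddCommMonoid M]
    (s : Finset ι) (n : μ) (f : (ι → μ) → M) :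
    ∑ a ∈ finsuppAntidiag s n, f a = ∑ a ∈ piAntidiag s n, f a := by
  rw [finsuppAntidiag, sum_map]
  exact sum_attach (piAntidiag s n) f

theorem Nat.Prime.dvd_choose_add_of_lt {p r j : ℕ} (hp : p.Prime) (hrj : r < j) (hjp : j < p) :
    p ∣ (p + r).choose j := by
  have := Fact.mk hp
  have h := Choose.choose_modEq_choose_mod_mul_choose_div_nat (n := p + r) (k := j) (p := p)
  rw [Nat.add_mod_left, Nat.mod_eq_of_lt (hrj.trans hjp), Nat.mod_eq_of_lt hjp,
    Nat.choose_eq_zero_of_lt hrj, zero_mul] at h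
  exact (Nat.modEq_zero_iff_dvd).mp h

theorem Nat.cast_choose_prime_sub_one {R : Type*} [CommRing R] {p : ℕ} [CharP R p]
    (hp : p.Prime) {k : ℕ} (hk : k < p) : ((p - 1).choose k : R) = (-1) ^ k := by
  induction k with
  | zero => simp
  | succ k ih =>
    have hpascal : (p - 1).choose k + (p - 1).choose (k + 1) = p.choose (k + 1) := by
      rw [← Nat.choose_succ_succ', Nat.sub_add_cancel hp.one_le]
    have hzero : (p.choose (k + 1) : R) = 0 :=
      (CharP.cast_eq_zero_iff R p _).mpr (hp.dvd_choose_self k.succ_ne_zero hk)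
    rw [← hpascal, Nat.cast_add, ih (by omega)] at hzero
    rw [eq_neg_of_add_eq_zero_right hzero, pow_succ]
    ring

theorem add_one_pow_prime_sub_one {R : Type*} [CommRing R] {p : ℕ} [CharP R p]
    (hp : p.Prime) (x : R) : (x + 1) ^ (p - 1) = ∑ k ∈ range p, (-x) ^ k := by
  rw [add_pow, Nat.sub_add_cancel hp.one_le]
  refine sum_congr rfl fun k hk => ?_
  rw [Nat.cast_choose_prime_sub_one hp (mem_range.mp hk)]
  ring

namespace PowerSeries

theorem prod_invOneSubPow {ι S : Type*} [CommRing S] (s : Finset ι) (d : ι → ℕ) :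
    ∏ i ∈ s, invOneSubPow S (d i) = invOneSubPow S (∑ i ∈ s, d i) := by
  classical
  induction s using Finset.induction_on with
  | empty => simp [invOneSubPow_zero]
  | insert j s hj ih => rw [prod_insert hj, sum_insert hj, ih, invOneSubPow_add]

theorem coeff_X_pow_mul_invOneSubPow {S : Type*} [CommRing S] (a b : ℕ) :
    PowerSeries.coeff a (PowerSeries.X ^ b * (invOneSubPow S (b + 1) : S⟦X⟧))
      = (a.choose b : S) := by
  rw [coeff_X_pow_mul', invOneSubPow_val_succ_eq_mk_add_choose, coeff_mk]
  split_ifs with h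
  · rw [Nat.add_sub_cancel' h]
  · rw [Nat.choose_eq_zero_of_lt (not_le.mp h), Nat.cast_zero]

end PowerSeries

theorem Nat.sum_piAntidiag_prod_choose {ι : Type*} [DecidableEq ι] {s : Finset ι}
    (hs : s.Nonempty) (b : ι → ℕ) (n : ℕ) :
    ∑ a ∈ s.piAntidiag n, ∏ i ∈ s, (a i).choose (b i)
      = (n + #s - 1).choose (∑ i ∈ s, b i + #s - 1) := by
  have hcard := hs.card_pos
  apply Nat.cast_injective (R := ℤ)
  -- `∑ a, a.choose b * X ^ a = X ^ b / (1 - X) ^ (b + 1)`, and these multiply well.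
  set F : ι → PowerSeries ℤ := fun i =>
    PowerSeries.X ^ b i * (PowerSeries.invOneSubPow ℤ (b i + 1) : PowerSeries ℤ)
  have hprod : ∏ i ∈ s, F i = PowerSeries.X ^ (∑ i ∈ s, b i)
      * (PowerSeries.invOneSubPow ℤ (∑ i ∈ s, b i + #s) : PowerSeries ℤ) := by
    rw [prod_mul_distrib, prod_pow_eq_pow_sum, ← Units.coe_prod, PowerSeries.prod_invOneSubPow,
      sum_add_distrib, sum_const, smul_eq_mul, mul_one]
  have hcoeff := PowerSeries.coeff_prod F n s
  rw [hprod, sum_finsuppAntidiag_eq_sum_piAntidiag s n fun a =>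
    ∏ i ∈ s, PowerSeries.coeff (a i) (F i)] at hcoeff
  simp only [F, PowerSeries.coeff_X_pow_mul_invOneSubPow] at hcoeff
  push_cast
  rw [← hcoeff, PowerSeries.coeff_X_pow_mul',
    PowerSeries.invOneSubPow_val_eq_mk_sub_one_add_choose_of_pos _ _ (by omega),
    PowerSeries.coeff_mk]
  split_ifs with h
  · congr 2
    omega
  · rw [Nat.choose_eq_zero_of_lt (by omega), Nat.cast_zero]

theorem Polynomial.coeff_prod_eq_sum_piAntidiag {ι R : Type*} [DecidableEq ι] [CommSemiring R]
    (s : Finset ι) (f : ι → Polynomial R) (k : ℕ) :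
    (∏ i ∈ s, f i).coeff k = ∑ b ∈ s.piAntidiag k, ∏ i ∈ s, (f i).coeff (b i) := by
  rw [← Polynomial.coeff_coe, ← Polynomial.coeToPowerSeries.ringHom_apply, map_prod,
    PowerSeries.coeff_prod]
  simp only [Polynomial.coeToPowerSeries.ringHom_apply, Polynomial.coeff_coe]
  exact sum_finsuppAntidiag_eq_sum_piAntidiag s k fun b => ∏ i ∈ s, (f i).coeff (b i)

theorem Polynomial.coeff_C_add_C_mul_X_pow {R : Type*} [CommSemiring R] (w v : R) (a b : ℕ) :
    ((Polynomial.C w + Polynomial.C v * Polynomial.X) ^ a).coeff b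
      = a.choose b * v ^ b * w ^ (a - b) := by
  rw [add_comm, add_pow, Polynomial.finsetSum_coeff]
  simp_rw [mul_pow, ← Polynomial.C_pow, mul_assoc, mul_comm (Polynomial.X ^ _), ← mul_assoc,
    ← Polynomial.C_mul, ← Polynomial.C_eq_natCast, ← Polynomial.C_mul, Polynomial.coeff_C_mul_X_pow]
  rw [sum_ite_eq]
  split_ifs with h
  · ring
  · rw [Nat.choose_eq_zero_of_lt (by simpa using h)]
    simp

section CompleteHomogeneous

variable {ι R : Type*} [DecidableEq ι] [CommRing R]

/-- `h_n(y_i : i ∈ s)`, the complete homogeneous symmetric polynomial `hsymm` evaluated at `y`. -/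
def hsymmEval (s : Finset ι) (n : ℕ) (y : ι → R) : R :=
  ∑ a ∈ s.piAntidiag n, ∏ i ∈ s, y i ^ a i

theorem map_hsymmEval {S F : Type*} [CommRing S] [FunLike F R S] [RingHomClass F R S] (f : F)
    (s : Finset ι) (n : ℕ) (y : ι → R) :
    f (hsymmEval s n y) = hsymmEval s n (fun i => f (y i)) := by
  simp [hsymmEval, map_sum, map_prod, map_pow]

theorem hsymmEval_mem_pow {J : Ideal R} {s : Finset ι} {y : ι → R} (hy : ∀ i ∈ s, y i ∈ J)
    (n : ℕ) : hsymmEval s n y ∈ J ^ n := by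
  refine sum_mem fun a ha => ?_
  rw [← (mem_piAntidiag.mp ha).1, ← prod_pow_eq_pow_sum]
  exact Ideal.prod_mem_prod fun i hi => Ideal.pow_mem_pow (hy i hi) _

theorem hsymmEval_sub_hsymmEval_mem {I : Ideal R} {s t : Finset ι} (hst : s ⊆ t) {y : ι → R}
    (hy : ∀ i ∈ t, i ∉ s → y i ∈ I) (n : ℕ) : hsymmEval t n y - hsymmEval s n y ∈ I := by
  classical
  have hsupp {a : ι → ℕ} (ha : a ∈ s.piAntidiag n) : ∀ i ∈ t, i ∉ s → a i = 0 :=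
    fun i _ his => not_imp_comm.mp ((mem_piAntidiag.mp ha).2 i) his
  have hsub : s.piAntidiag n ⊆ t.piAntidiag n := fun a ha => by
    refine mem_piAntidiag.mpr ⟨?_, fun i hi => hst ((mem_piAntidiag.mp ha).2 i hi)⟩
    rw [← sum_subset hst (hsupp ha), (mem_piAntidiag.mp ha).1]
  rw [hsymmEval, hsymmEval, ← sum_sdiff hsub, add_sub_assoc]
  refine add_mem (sum_mem fun a ha => ?_) ?_
  · obtain ⟨hat, has⟩ := mem_sdiff.mp ha
    obtain ⟨i, hai, his⟩ : ∃ i, a i ≠ 0 ∧ i ∉ s := by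
      by_contra! h
      refine has (mem_piAntidiag.mpr ⟨?_, h⟩)
      rw [sum_subset hst fun i _ his => not_imp_comm.mp (h i) his, (mem_piAntidiag.mp hat).1]
    have hit : i ∈ t := (mem_piAntidiag.mp hat).2 i hai
    exact Ideal.mem_of_dvd _ (dvd_prod_of_mem _ hit)
      (Ideal.pow_mem_of_mem _ (hy i hit his) _ (Nat.pos_of_ne_zero hai))
  · rw [← sum_sub_distrib]
    refine sum_mem fun a ha => ?_
    rw [prod_subset hst fun i hit his => by rw [hsupp ha i hit his, pow_zero], sub_self]
    exact zero_mem I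

theorem coeff_hsymmEval_C_add_C_mul_X {s : Finset ι} (hs : s.Nonempty) (w : R) (v : ι → R)
    (n k : ℕ) :
    (hsymmEval s n fun i => Polynomial.C w + Polynomial.C (v i) * Polynomial.X).coeff k
      = ((n + #s - 1).choose (k + #s - 1) : R) * w ^ (n - k) * hsymmEval s k v := by
  have hterm : ∀ a ∈ s.piAntidiag n, ∀ b ∈ s.piAntidiag k,
      ∏ i ∈ s, ((a i).choose (b i) * v i ^ b i * w ^ (a i - b i) : R)
        = ((∏ i ∈ s, (a i).choose (b i) : ℕ) : R) * (w ^ (n - k) * ∏ i ∈ s, v i ^ b i) := by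
    intro a ha b hb
    by_cases hba : ∀ i ∈ s, b i ≤ a i
    · rw [prod_mul_distrib, prod_mul_distrib, prod_pow_eq_pow_sum, sum_tsub_distrib _ hba,
        (mem_piAntidiag.mp ha).1, (mem_piAntidiag.mp hb).1, Nat.cast_prod]
      ring
    · push Not at hba
      obtain ⟨i, hi, hab⟩ := hba
      have hzero : (a i).choose (b i) = 0 := Nat.choose_eq_zero_of_lt hab
      rw [prod_eq_zero hi (by rw [hzero, Nat.cast_zero, zero_mul, zero_mul]),
        prod_eq_zero hi hzero, Nat.cast_zero, zero_mul]
  simp only [hsymmEval, Polynomial.finsetSum_coeff, Polynomial.coeff_prod_eq_sum_piAntidiag,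
    Polynomial.coeff_C_add_C_mul_X_pow]
  rw [sum_congr rfl fun a ha => sum_congr rfl (hterm a ha), sum_comm, mul_sum]
  refine sum_congr rfl fun b hb => ?_
  rw [← sum_mul, ← Nat.cast_sum, Nat.sum_piAntidiag_prod_choose hs, (mem_piAntidiag.mp hb).1]
  ring

theorem hsymmEval_add_const {s : Finset ι} (hs : s.Nonempty) (w : R) (v : ι → R) (n : ℕ) :
    hsymmEval s n (fun i => w + v i)
      = ∑ k ∈ range (n + 1), ((n + #s - 1).choose (k + #s - 1) : R) * w ^ (n - k)
          * hsymmEval s k v := by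
  -- The power of `X` counts the factors taken from `v`.
  set Φ := hsymmEval s n fun i => Polynomial.C w + Polynomial.C (v i) * Polynomial.X
  have hΦ : Φ.eval 1 = hsymmEval s n (fun i => w + v i) := by
    rw [← Polynomial.coe_evalRingHom, map_hsymmEval]
    simp
  have hdeg : Φ.natDegree < n + 1 := by
    refine Nat.lt_succ_of_le (Polynomial.natDegree_le_iff_coeff_eq_zero.mpr fun k hk => ?_)
    have := hs.card_pos
    rw [coeff_hsymmEval_C_add_C_mul_X hs, Nat.choose_eq_zero_of_lt (by omega), Nat.cast_zero,
      zero_mul, zero_mul]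
  rw [← hΦ, Polynomial.eval_eq_sum_range' hdeg]
  simp only [one_pow, mul_one]
  exact sum_congr rfl fun k _ => coeff_hsymmEval_C_add_C_mul_X hs w v n k

theorem hsymmEval_prime_sub_one_mem_pow {p : ℕ} [CharP R p] (hp : p.Prime) {J : Ideal R}
    {s : Finset ι} (hs : 2 ≤ #s) (w : R) {y : ι → R} (hy : ∀ i ∈ s, y i - w ∈ J) :
    hsymmEval s (p - 1) y ∈ J ^ (p + 1 - #s) := by
  have hyw : y = fun i => w + (y i - w) := by
    funext i
    ring
  rw [hyw, hsymmEval_add_const (card_pos.mp (by omega)), Nat.sub_add_cancel hp.one_le]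
  refine sum_mem fun k _ => ?_
  by_cases hk : k + #s ≤ p
  · have hdvd := hp.dvd_choose_add_of_lt (r := #s - 2) (j := k + #s - 1) (by omega) (by omega)
    rw [show p + (#s - 2) = p - 1 + #s - 1 by omega, ← CharP.cast_eq_zero_iff R p] at hdvd
    rw [hdvd, zero_mul, zero_mul]
    exact zero_mem _
  · exact Ideal.mul_mem_left _ _ (Ideal.pow_le_pow_right (by omega) (hsymmEval_mem_pow hy k))

theorem hsymmEval_prime_sub_one_mem_pow_of_subset {p : ℕ} [CharP R p] (hp : p.Prime)
    {J : Ideal R} {s t : Finset ι} (hst : s ⊆ t) (hs : 2 ≤ #s) (w : R) {y : ι → R}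
    (hy : ∀ i ∈ s, y i - w ∈ J) (hy' : ∀ i ∈ t, i ∉ s → y i ∈ J ^ (p - 1)) :
    hsymmEval t (p - 1) y ∈ J ^ (p + 1 - #s) := by
  rw [← sub_add_cancel (hsymmEval t (p - 1) y) (hsymmEval s (p - 1) y)]
  exact add_mem (Ideal.pow_le_pow_right (by omega) (hsymmEval_sub_hsymmEval_mem hst hy' _))
    (hsymmEval_prime_sub_one_mem_pow hp hs w hy)

end CompleteHomogeneous

theorem homogeneousComponent_prod_X_add_one_pow {σ R : Type*} [Fintype σ] [DecidableEq σ]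
    [CommRing R] {p : ℕ} [CharP R p] (hp : p.Prime) :
    homogeneousComponent (p - 1) ((∏ i, (X i + 1 : MvPolynomial σ R)) ^ (p - 1))
      = hsymmEval univ (p - 1) fun i => -X i := by
  have hhom (a : σ → ℕ) : (∏ i, (-X i : MvPolynomial σ R) ^ a i).IsHomogeneous (∑ i, a i) :=
    IsHomogeneous.prod _ _ _ fun i _ => by simpa using (isHomogeneous_X R i).neg.pow (a i)
  rw [← prod_pow, prod_congr rfl fun i _ => add_one_pow_prime_sub_one hp (X i), prod_univ_sum,
    map_sum, hsymmEval]
  simp_rw [homogeneousComponent_of_mem ((mem_homogeneousSubmodule _ _).mpr (hhom _))]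
  rw [← sum_filter]
  congr 1
  ext a
  simp only [mem_filter, Fintype.mem_piFinset, mem_range, mem_piAntidiag, mem_univ,
    implies_true, and_true]
  refine ⟨fun h => h.2.symm, fun h => ⟨fun i => ?_, h.symm⟩⟩
  have hai : a i ≤ univ.sum a := single_le_sum (fun j _ => Nat.zero_le (a j)) (mem_univ i)
  have := hp.one_le
  omega

theorem pow_sub_one_eq_one_of_mem_range_natCast {K : Type*} [Ring K] {p : ℕ} [CharP K p]
    (hp : p.Prime) {x : K} (hx : x ∈ Set.range (Nat.cast : ℕ → K)) (hx0 : x ≠ 0) :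
    x ^ (p - 1) = 1 := by
  have := Fact.mk hp
  obtain ⟨m, rfl⟩ := hx
  rw [← map_natCast (ZMod.castHom (dvd_refl p) K)] at hx0 ⊢
  rw [← map_pow, ZMod.pow_card_sub_one_eq_one fun h => hx0 (by rw [h, map_zero]), map_one]

section PointLinearIdeal

variable {σ : Type*} {K : Type} [Field K] (π : σ → K) (i₀ : σ)

noncomputable def pointLinearIdeal : Ideal (MvPolynomial σ K) :=
  Ideal.span (Set.range fun i => C (π i₀) * X i - C (π i) * X i₀)

theorem C_mul_X_sub_C_mul_X_mem_pointLinearIdeal (i : σ) :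
    C (π i₀) * X i - C (π i) * X i₀ ∈ pointLinearIdeal π i₀ :=
  Ideal.subset_span ⟨i, rfl⟩

theorem pointLinearIdeal_le_pointIdeal {n : ℕ} (π : Fin n → K) (i₀ : Fin n) :
    pointLinearIdeal π i₀ ≤ pointIdeal π := by
  rw [pointLinearIdeal, Ideal.span_le]
  rintro _ ⟨i, rfl⟩
  refine Ideal.subset_span ⟨⟨1, (isHomogeneous_C_mul_X _ _).sub (isHomogeneous_C_mul_X _ _)⟩, ?_⟩
  simp [mul_comm]

variable {π i₀} {q : ℕ}

theorem X_pow_sub_X_pow_mem_pointLinearIdeal (h₀ : π i₀ ^ q = 1) {i : σ} (hi : π i ^ q = 1) :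
    X i ^ q - X i₀ ^ q ∈ pointLinearIdeal π i₀ := by
  have h := Ideal.mem_of_dvd _ (sub_dvd_pow_sub_pow (C (π i₀) * X i) (C (π i) * X i₀) q)
    (C_mul_X_sub_C_mul_X_mem_pointLinearIdeal π i₀ i)
  rwa [mul_pow, mul_pow, ← C_pow, ← C_pow, h₀, hi, C_1, one_mul, one_mul] at h

theorem X_pow_mem_pointLinearIdeal_pow (h₀ : π i₀ ^ q = 1) {i : σ} (hi : π i = 0) :
    X i ^ q ∈ pointLinearIdeal π i₀ ^ q := by
  have h := Ideal.pow_mem_pow (C_mul_X_sub_C_mul_X_mem_pointLinearIdeal π i₀ i) q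
  rwa [hi, C_0, zero_mul, sub_zero, mul_pow, ← C_pow, h₀, C_1, one_mul] at h

end PointLinearIdeal

theorem stmt19_general (p N t : ℕ) (hp : p.Prime) (hNp : N ≤ p)
    (ht : t < N) (K : Type) [Field K] [CharP K p]
    (π : Fin (N + 1) → K)
    (hπ : ∀ i, π i ∈ Set.range (Nat.cast : ℕ → K))
    (hzero : Nat.card {i : Fin (N + 1) // π i = 0} = t) :
    let Qc : MvPolynomial (Fin (N + 1)) K :=
      homogeneousComponent (p - 1) ((∏ i, (X i + 1)) ^ (p - 1))
    aeval (fun i : Fin (N + 1) => (X i : MvPolynomial (Fin (N + 1)) K) ^ (p - 1)) Qc ∈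
      (pointIdeal π) ^ (p - N + t) := by
  intro Qc
  classical
  set S := univ.filter fun i => π i ≠ 0
  have hS : #S = N + 1 - t := by
    rw [Nat.card_eq_fintype_card, Fintype.card_subtype] at hzero
    have := card_filter_add_card_filter_not (s := univ) fun i : Fin (N + 1) => π i = 0
    rw [hzero, card_univ, Fintype.card_fin] at this
    change t + #S = N + 1 at this
    omega
  obtain ⟨i₀, hi₀⟩ : S.Nonempty := card_pos.mp (by omega)
  have hfermat (i : Fin (N + 1)) (hi : π i ≠ 0) : π i ^ (p - 1) = 1 :=
    pow_sub_one_eq_one_of_mem_range_natCast hp (hπ i) hi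
  have h₀ := hfermat i₀ (mem_filter.mp hi₀).2
  have hQc : aeval (fun i => X i ^ (p - 1)) Qc
      = hsymmEval univ (p - 1) fun i => -(X i : MvPolynomial (Fin (N + 1)) K) ^ (p - 1) := by
    rw [show Qc = _ from homogeneousComponent_prod_X_add_one_pow hp, map_hsymmEval]
    simp
  rw [hQc, show p - N + t = p + 1 - #S by omega]
  refine Ideal.pow_right_mono (pointLinearIdeal_le_pointIdeal π i₀) _
    (hsymmEval_prime_sub_one_mem_pow_of_subset hp (subset_univ S) (by omega) (-X i₀ ^ (p - 1))
      (fun i hi => ?_) fun i _ hi => ?_)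
  · rw [neg_sub_neg, ← neg_sub]
    exact neg_mem (X_pow_sub_X_pow_mem_pointLinearIdeal h₀ (hfermat i (mem_filter.mp hi).2))
  · exact neg_mem (X_pow_mem_pointLinearIdeal_pow h₀ (by simpa [S] using hi))

theorem stmt19 (p N t : ℕ) (hp : p.Prime) (hN : 1 ≤ N) (hNp : N ≤ p)
    (ht : t < N) (K : Type) [Field K] [CharP K p]
    (π : Fin (N + 1) → K)
    (hπ : ∀ i, π i ∈ Set.range (Nat.cast : ℕ → K))
    (hzero : Nat.card {i : Fin (N + 1) // π i = 0} = t) :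
    let Qc : MvPolynomial (Fin (N + 1)) K :=
      homogeneousComponent (p - 1) ((∏ i, (X i + 1)) ^ (p - 1))
    aeval (fun i : Fin (N + 1) => (X i : MvPolynomial (Fin (N + 1)) K) ^ (p - 1)) Qc ∈
      (pointIdeal π) ^ (p - N + t) :=
  stmt19_general p N t hp hNp ht K π hπ hzero
end
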